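/- arXiv:2403.01082 — 5 statements merged into one kernel-verified Lean document; each statement's English description precedes it below -/
import Mathlib

section
/- Let n ≥ 2, let F = GF(2^n), let ν be the Frobenius automorphism of F (ν(x) = x² for all x ∈ F), and let A(n, ν) be the group, under matrix multiplication, of all 3×3 matrices U(a,b) over F with first row (1,0,0), second row (a,1,0) and third row (b, ν(a), 1), where a, b ∈ F. Then the CNL-spectrum of Γ_{A(n,ν)} is {0 with multiplicity 2^n−1, 2^n(2^n−2) with multiplicity (2^n−1)²}; the CNSL-spectrum of Γ_{A(n,ν)} is {2(2^n−1)(2^n−2) with multiplicity 2^n−1, (2^n−2)² with multiplicity (2^n−1)²}; and LE_CN(Γ_{A(n,ν)}) = LE⁺_CN(Γ_{A(n,ν)}) = 2(2^n−2)(2^n−1)². -/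
/-! The commuting graph of `A(n, ν)` is a disjoint union of `2^n - 1` cliques of size `2^n`:
writing `M = U(a, b)`, two elements commute iff `a² a' = a'² a`, i.e. iff `a = 0`, `a' = 0` or
`a = a'`. Since `|F| > 2`, `M` is central iff `a = 0`, and non-central elements commute iff
`a = a'`.

For a disjoint union of `m` cliques of size `k` with vertex-to-clique incidence matrix `P`, one has
`CN = (k - 2)(P Pᵀ - I)` and `CNRS = (k - 1)(k - 2) I`, so `CNL` and `CNSL` are scalar matrices plus
multiples of `P Pᵀ`. Since `Pᵀ P = k I`, the characteristic polynomial of `P Pᵀ` is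
`X^(km - m) (X - k)^m`, which gives both spectra; the energies then follow from
`Δ = (k - 1)(k - 2)`. -/

open scoped Classical

noncomputable section

namespace CN

variable {V : Type*} [Fintype V] [DecidableEq V]

/-- The common neighborhood matrix of a finite simple graph: the `(i,j)` entry, for `i ≠ j`,
is the number of vertices distinct from `i` and `j` adjacent to both; diagonal entries are `0`. -/
def cnMatrix (G : SimpleGraph V) : Matrix V V ℝ := fun i j =>
  if i = j then 0
  else ((Finset.univ.filter fun x => x ≠ i ∧ x ≠ j ∧ G.Adj x i ∧ G.Adj x j).card : ℝ)

/-- The diagonal matrix of row sums of the common neighborhood matrix. -/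
def cnrs (G : SimpleGraph V) : Matrix V V ℝ :=
  Matrix.diagonal fun i => ∑ j, cnMatrix G i j

/-- The common neighborhood Laplacian matrix. -/
def cnl (G : SimpleGraph V) : Matrix V V ℝ := cnrs G - cnMatrix G

/-- The common neighborhood signless Laplacian matrix. -/
def cnsl (G : SimpleGraph V) : Matrix V V ℝ := cnrs G + cnMatrix G

/-- The CNL-spectrum: the multiset of eigenvalues (roots of the characteristic polynomial,
with multiplicity) of the common neighborhood Laplacian matrix. -/
def cnlSpec (G : SimpleGraph V) : Multiset ℝ := (cnl G).charpoly.roots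

/-- The CNSL-spectrum. -/
def cnslSpec (G : SimpleGraph V) : Multiset ℝ := (cnsl G).charpoly.roots

/-- `Δ_𝒢 = tr(CNRS(𝒢)) / |V(𝒢)|`. -/
def cnDelta (G : SimpleGraph V) : ℝ := (cnrs G).trace / (Fintype.card V : ℝ)

/-- The CNL-energy `LE_CN`. -/
def cnlEnergy (G : SimpleGraph V) : ℝ := ((cnlSpec G).map fun a => |a - cnDelta G|).sum

/-- The CNSL-energy `LE⁺_CN`. -/
def cnslEnergy (G : SimpleGraph V) : ℝ := ((cnslSpec G).map fun a => |a - cnDelta G|).sum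

/-- A graph on `n` vertices is CNL-hyperenergetic if its CNL-energy exceeds that of
the complete graph `K_n`. -/
def IsCNLHyperenergetic (G : SimpleGraph V) : Prop :=
  cnlEnergy (⊤ : SimpleGraph (Fin (Fintype.card V))) < cnlEnergy G

/-- A graph on `n` vertices is CNSL-hyperenergetic if its CNSL-energy exceeds that of
the complete graph `K_n`. -/
def IsCNSLHyperenergetic (G : SimpleGraph V) : Prop :=
  cnslEnergy (⊤ : SimpleGraph (Fin (Fintype.card V))) < cnslEnergy G

/-- The commuting graph of a group: vertices are the non-central elements, and two distinct
vertices are adjacent iff they commute. -/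
def commutingGraph (G : Type*) [Group G] :
    SimpleGraph {g : G // g ∉ Subgroup.center G} where
  Adj x y := x ≠ y ∧ (x : G) * y = (y : G) * x
  symm := ⟨fun _ _ h => ⟨h.1.symm, h.2.symm⟩⟩
  loopless := ⟨fun _ h => h.1 rfl⟩

end CN

open CN

/-- The group `A(n, ν)` of all matrices `U(a,b)` with rows `(1,0,0), (a,1,0), (b, ν a, 1)`
over `F = GF(2^n)`, where `ν` is the Frobenius automorphism of `F`,
under matrix multiplication. -/
def Anu (n : ℕ) : Subgroup (GL (Fin 3) (GaloisField 2 n)) where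
  carrier := {M | ∃ a b : GaloisField 2 n,
    (M : Matrix (Fin 3) (Fin 3) (GaloisField 2 n)) =
      !![1, 0, 0; a, 1, 0; b, frobenius (GaloisField 2 n) 2 a, 1]}
  one_mem' := ⟨0, 0, by simp [Matrix.one_fin_three]⟩
  mul_mem' := by
    rintro M N ⟨a, b, hM⟩ ⟨a', b', hN⟩
    refine ⟨a + a', b + b' + frobenius (GaloisField 2 n) 2 a * a', ?_⟩
    show (M : Matrix (Fin 3) (Fin 3) (GaloisField 2 n)) * N = _
    rw [hM, hN]
    ext i j
    fin_cases i <;> fin_cases j <;>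
      · simp [Matrix.mul_apply, Fin.sum_univ_succ, map_add]
        try ring
  inv_mem' := by
    rintro M ⟨a, b, hM⟩
    refine ⟨a, b + frobenius (GaloisField 2 n) 2 a * a, ?_⟩
    have h1 : (M : Matrix (Fin 3) (Fin 3) (GaloisField 2 n)) *
        !![1, 0, 0; a, 1, 0; b + frobenius (GaloisField 2 n) 2 a * a,
          frobenius (GaloisField 2 n) 2 a, 1] = 1 := by
      rw [hM]
      ext i j
      fin_cases i <;> fin_cases j <;>
        · simp [Matrix.mul_apply, Fin.sum_univ_succ, Matrix.one_apply]
          try ring_nf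
          try simp [CharTwo.two_eq_zero]
    calc (M⁻¹ : GL (Fin 3) (GaloisField 2 n)).val
        = M⁻¹.val * ((M : Matrix (Fin 3) (Fin 3) (GaloisField 2 n)) *
            !![1, 0, 0; a, 1, 0; b + frobenius (GaloisField 2 n) 2 a * a,
              frobenius (GaloisField 2 n) 2 a, 1]) := by rw [h1, mul_one]
      _ = (M⁻¹.val * M.val) *
            !![1, 0, 0; a, 1, 0; b + frobenius (GaloisField 2 n) 2 a * a,
              frobenius (GaloisField 2 n) 2 a, 1] := by rw [mul_assoc]
      _ = _ := by rw [M.inv_mul, one_mul]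

open Polynomial Matrix Finset

theorem Matrix.charpoly_scalar_add_mul {m n R : Type*} [Fintype m] [DecidableEq m] [Fintype n]
    [DecidableEq n] [CommRing R] (A : Matrix m n R) (B : Matrix n m R) (μ ν : R)
    (hBA : B * A = scalar n ν) (hle : Fintype.card n ≤ Fintype.card m) :
    (scalar m μ + A * B).charpoly =
      (X - C μ) ^ (Fintype.card m - Fintype.card n) * (X - C (μ + ν)) ^ Fintype.card n := by
  have hshift : scalar m μ + A * B = A * B - scalar m (-μ) := by
    rw [map_neg, sub_neg_eq_add, add_comm]
  rw [hshift, charpoly_sub_scalar, charpoly_mul_comm_of_le A B hle, hBA, scalar_apply,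
    charpoly_diagonal, Finset.prod_const, Finset.card_univ]
  simp only [mul_comp, pow_comp, sub_comp, X_comp, C_comp, C_neg, ← sub_eq_add_neg, sub_sub, C_add]

theorem Polynomial.roots_X_sub_C_pow_mul_X_sub_C_pow {R : Type*} [CommRing R] [IsDomain R]
    (μ ν : R) (a b : ℕ) :
    ((X - C μ) ^ a * (X - C ν) ^ b).roots = Multiset.replicate a μ + Multiset.replicate b ν := by
  rw [roots_mul (mul_ne_zero (pow_ne_zero _ (X_sub_C_ne_zero μ))
      (pow_ne_zero _ (X_sub_C_ne_zero ν))), roots_pow, roots_pow, roots_X_sub_C, roots_X_sub_C,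
    Multiset.nsmul_singleton, Multiset.nsmul_singleton]

section LabelMatrix

variable {V ι : Type*} [Fintype ι] [DecidableEq ι] (f : V → ι)

def labelMatrix : Matrix V ι ℝ := Matrix.of fun x i => if f x = i then 1 else 0

theorem labelMatrix_mul_transpose_apply (x y : V) :
    (labelMatrix f * (labelMatrix f)ᵀ) x y = if f x = f y then 1 else 0 := by
  simp [labelMatrix, Matrix.mul_apply]

theorem transpose_mul_labelMatrix [Fintype V] {k : ℕ} (hf : ∀ i, #{x | f x = i} = k) :
    (labelMatrix f)ᵀ * labelMatrix f = scalar ι (k : ℝ) := by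
  ext i j
  simp only [labelMatrix, Matrix.mul_apply, transpose_apply, of_apply, mul_ite, mul_one, mul_zero,
    scalar_apply, diagonal_apply]
  split_ifs with hij
  · subst hij
    simp only [← ite_and, and_self]
    rw [Finset.sum_boole, hf]
  · exact Finset.sum_eq_zero fun x _ => by grind

theorem transpose_mul_smul_labelMatrix [Fintype V] (c : ℝ) {k : ℕ}
    (hf : ∀ i, #{x | f x = i} = k) :
    (labelMatrix f)ᵀ * (c • labelMatrix f) = scalar ι (c * k) := by
  rw [Matrix.mul_smul, transpose_mul_labelMatrix f hf, scalar_apply, scalar_apply,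
    ← smul_one_eq_diagonal, ← smul_one_eq_diagonal, smul_smul]

theorem card_eq_mul_of_card_fiber [Fintype V] {k : ℕ} (hf : ∀ i, #{x | f x = i} = k) :
    Fintype.card V = k * Fintype.card ι := by
  rw [← card_univ, card_eq_sum_card_fiberwise (t := univ) (fun x _ => mem_univ (f x))]
  simp [hf, mul_comm]

theorem roots_charpoly_scalar_add_smul_labelMatrix_mul_transpose [Fintype V] [DecidableEq V]
    (μ c : ℝ) {k : ℕ} (hk : 0 < k) (hf : ∀ i, #{x | f x = i} = k) :
    (scalar V μ + (c • labelMatrix f) * (labelMatrix f)ᵀ).charpoly.roots =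
      Multiset.replicate (Fintype.card ι) (μ + c * k) +
        Multiset.replicate ((k - 1) * Fintype.card ι) μ := by
  have hV := card_eq_mul_of_card_fiber f hf
  rw [charpoly_scalar_add_mul _ _ _ _ (transpose_mul_smul_labelMatrix f c hf)
      (hV ▸ Nat.le_mul_of_pos_left _ hk),
    roots_X_sub_C_pow_mul_X_sub_C_pow, hV, ← Nat.sub_one_mul, add_comm]

end LabelMatrix

namespace CN

variable {V ι : Type*} [Fintype V] [DecidableEq V] [Fintype ι] [DecidableEq ι]

structure IsUnionOfCliques (G : SimpleGraph V) (f : V → ι) (k : ℕ) : Prop where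
  adj_iff : ∀ x y, G.Adj x y ↔ x ≠ y ∧ f x = f y
  card_fiber : ∀ i, #{x | f x = i} = k

namespace IsUnionOfCliques

variable {G : SimpleGraph V} {f : V → ι} {k : ℕ}

theorem cnMatrix_eq (h : IsUnionOfCliques G f k) :
    cnMatrix G = ((k : ℝ) - 2) • (labelMatrix f * (labelMatrix f)ᵀ - 1) := by
  ext x y
  simp only [cnMatrix, Matrix.smul_apply, Matrix.sub_apply, labelMatrix_mul_transpose_apply,
    one_apply, smul_eq_mul]
  by_cases hxy : x = y
  · simp [hxy]
  rw [if_neg hxy, if_neg hxy, sub_zero]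
  by_cases hfxy : f x = f y
  · have hcommon : ({z | z ≠ x ∧ z ≠ y ∧ G.Adj z x ∧ G.Adj z y} : Finset V) =
        ({z | f z = f x} : Finset V) \ {x, y} := by
      ext z
      simp only [h.adj_iff, mem_filter, mem_univ, true_and, mem_sdiff, mem_insert,
        mem_singleton]
      grind
    have hcard := card_sdiff_add_card_eq_card (s := {x, y}) (t := {z | f z = f x})
      (by intro z; simp only [mem_insert, mem_singleton, mem_filter, mem_univ, true_and]; grind)
    rw [card_pair hxy, h.card_fiber] at hcard
    rw [hcommon, if_pos hfxy, mul_one, ← hcard]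
    push_cast
    ring
  · rw [if_neg hfxy, mul_zero, Nat.cast_eq_zero, card_eq_zero, filter_eq_empty_iff]
    intro z _
    simp only [h.adj_iff]
    grind

theorem cnrs_eq (h : IsUnionOfCliques G f k) :
    cnrs G = scalar V (((k : ℝ) - 1) * ((k : ℝ) - 2)) := by
  have hrow (x : V) : ∑ y, (labelMatrix f * (labelMatrix f)ᵀ) x y = k := by
    simp_rw [labelMatrix_mul_transpose_apply, Finset.sum_boole]
    simp_rw [eq_comm (a := f x)]
    exact_mod_cast h.card_fiber (f x)
  rw [cnrs, scalar_apply, h.cnMatrix_eq]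
  congr 1
  ext x
  simp only [Matrix.smul_apply, Matrix.sub_apply, smul_eq_mul, ← Finset.mul_sum,
    Finset.sum_sub_distrib, hrow, one_apply, Finset.sum_ite_eq, if_pos (mem_univ x)]
  ring

theorem cnl_eq (h : IsUnionOfCliques G f k) :
    cnl G = scalar V ((k : ℝ) * (k - 2)) + (-((k : ℝ) - 2) • labelMatrix f) * (labelMatrix f)ᵀ := by
  rw [cnl, h.cnrs_eq, h.cnMatrix_eq, Matrix.smul_mul, scalar_apply, scalar_apply,
    ← smul_one_eq_diagonal, ← smul_one_eq_diagonal]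
  module

theorem cnsl_eq (h : IsUnionOfCliques G f k) :
    cnsl G = scalar V (((k : ℝ) - 2) ^ 2) + (((k : ℝ) - 2) • labelMatrix f) * (labelMatrix f)ᵀ := by
  rw [cnsl, h.cnrs_eq, h.cnMatrix_eq, Matrix.smul_mul, scalar_apply, scalar_apply,
    ← smul_one_eq_diagonal, ← smul_one_eq_diagonal]
  module

theorem cnlSpec_eq (h : IsUnionOfCliques G f k) (hk : 0 < k) :
    cnlSpec G = Multiset.replicate (Fintype.card ι) 0 +
      Multiset.replicate ((k - 1) * Fintype.card ι) ((k : ℝ) * (k - 2)) := by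
  rw [cnlSpec, h.cnl_eq, roots_charpoly_scalar_add_smul_labelMatrix_mul_transpose f _ _ hk
    h.card_fiber]
  congr 2
  ring

theorem cnslSpec_eq (h : IsUnionOfCliques G f k) (hk : 0 < k) :
    cnslSpec G = Multiset.replicate (Fintype.card ι) (2 * ((k : ℝ) - 1) * (k - 2)) +
      Multiset.replicate ((k - 1) * Fintype.card ι) (((k : ℝ) - 2) ^ 2) := by
  rw [cnslSpec, h.cnsl_eq, roots_charpoly_scalar_add_smul_labelMatrix_mul_transpose f _ _ hk
    h.card_fiber]
  congr 2
  ring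

theorem cnDelta_eq [Nonempty ι] (h : IsUnionOfCliques G f k) (hk : 0 < k) :
    cnDelta G = ((k : ℝ) - 1) * (k - 2) := by
  have hV : (Fintype.card V : ℝ) ≠ 0 := by
    rw [card_eq_mul_of_card_fiber f h.card_fiber]
    positivity
  rw [cnDelta, h.cnrs_eq, scalar_apply, trace_diagonal, sum_const, card_univ, nsmul_eq_mul,
    mul_div_cancel_left₀ _ hV]

theorem cnlEnergy_eq [Nonempty ι] (h : IsUnionOfCliques G f k) (hk : 2 ≤ k) :
    cnlEnergy G = 2 * Fintype.card ι * ((k : ℝ) - 1) * (k - 2) := by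
  have hk' : (2 : ℝ) ≤ k := by exact_mod_cast hk
  rw [cnlEnergy, h.cnlSpec_eq (by omega), h.cnDelta_eq (by omega)]
  simp only [Multiset.map_add, Multiset.map_replicate, Multiset.sum_add, Multiset.sum_replicate,
    nsmul_eq_mul]
  rw [abs_of_nonpos (by nlinarith), show (k : ℝ) * (k - 2) - (k - 1) * (k - 2) = k - 2 by ring,
    abs_of_nonneg (by linarith), Nat.cast_mul, Nat.cast_sub (by omega)]
  push_cast
  ring

theorem cnslEnergy_eq [Nonempty ι] (h : IsUnionOfCliques G f k) (hk : 2 ≤ k) :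
    cnslEnergy G = 2 * Fintype.card ι * ((k : ℝ) - 1) * (k - 2) := by
  have hk' : (2 : ℝ) ≤ k := by exact_mod_cast hk
  rw [cnslEnergy, h.cnslSpec_eq (by omega), h.cnDelta_eq (by omega)]
  simp only [Multiset.map_add, Multiset.map_replicate, Multiset.sum_add, Multiset.sum_replicate,
    nsmul_eq_mul]
  rw [show 2 * ((k : ℝ) - 1) * (k - 2) - (k - 1) * (k - 2) = (k - 1) * (k - 2) by ring,
    show ((k : ℝ) - 2) ^ 2 - (k - 1) * (k - 2) = -(k - 2) by ring, abs_neg,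
    abs_of_nonneg (by nlinarith), abs_of_nonneg (by linarith), Nat.cast_mul,
    Nat.cast_sub (by omega)]
  push_cast
  ring

end IsUnionOfCliques

end CN

theorem sq_mul_eq_sq_mul_iff {R : Type*} [CommRing R] [IsDomain R] {x y : R} :
    x ^ 2 * y = y ^ 2 * x ↔ x = 0 ∨ y = 0 ∨ x = y := by
  rw [← sub_eq_zero, show x ^ 2 * y - y ^ 2 * x = x * y * (x - y) by ring, mul_eq_zero,
    mul_eq_zero, sub_eq_zero, or_assoc]

namespace Anu

variable {n : ℕ}

local notation "F" => GaloisField 2 n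

def a (M : Anu n) : F := ((M : GL (Fin 3) F) : Matrix (Fin 3) (Fin 3) F) 1 0

def b (M : Anu n) : F := ((M : GL (Fin 3) F) : Matrix (Fin 3) (Fin 3) F) 2 0

theorem coe_eq (M : Anu n) : ((M : GL (Fin 3) F) : Matrix (Fin 3) (Fin 3) F) =
    !![1, 0, 0; a M, 1, 0; b M, frobenius F 2 (a M), 1] := by
  obtain ⟨a, b, hM⟩ := M.2
  simp [Anu.a, Anu.b, hM]

theorem ext {M N : Anu n} (ha : a M = a N) (hb : b M = b N) : M = N :=
  Subtype.ext <| Units.ext <| by rw [coe_eq M, coe_eq N, ha, hb]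

theorem a_mul (M N : Anu n) : a (M * N) = a M + a N := by
  rw [Anu.a, Subgroup.coe_mul, Units.val_mul, coe_eq M, coe_eq N]
  simp [Matrix.mul_apply, Fin.sum_univ_three]

theorem b_mul (M N : Anu n) : b (M * N) = b M + b N + frobenius F 2 (a M) * a N := by
  rw [Anu.b, Subgroup.coe_mul, Units.val_mul, coe_eq M, coe_eq N]
  simp [Matrix.mul_apply, Fin.sum_univ_three]
  ring

theorem commute_iff (M N : Anu n) : Commute M N ↔ a M = 0 ∨ a N = 0 ∨ a M = a N := by
  rw [← sq_mul_eq_sq_mul_iff, ← frobenius_def, ← frobenius_def, commute_iff_eq]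
  constructor
  · intro h
    have hb := congrArg b h
    rw [b_mul, b_mul, add_comm (b N)] at hb
    exact add_left_cancel hb
  · intro h
    refine ext (by rw [a_mul, a_mul, add_comm]) ?_
    rw [b_mul, b_mul, add_comm (b N), h]

def mk (a b : F) : Anu n :=
  ⟨.mkOfDetNeZero !![1, 0, 0; a, 1, 0; b, frobenius F 2 a, 1] (by simp [det_fin_three]), a, b, rfl⟩

@[simp] theorem a_mk (a b : F) : Anu.a (mk a b) = a := by simp [Anu.a, mk]

@[simp] theorem b_mk (a b : F) : Anu.b (mk a b) = b := by simp [Anu.b, mk]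

theorem mem_center_of_a_eq_zero {M : Anu n} (h : a M = 0) : M ∈ Subgroup.center (Anu n) :=
  Subgroup.mem_center_iff.mpr fun N => (commute_iff N M).mpr (Or.inr (Or.inl h))

theorem mem_center_iff (hn : 2 ≤ n) (M : Anu n) : M ∈ Subgroup.center (Anu n) ↔ a M = 0 := by
  refine ⟨fun hM => ?_, mem_center_of_a_eq_zero⟩
  by_contra ha
  have : Fintype F := Fintype.ofFinite F
  have hcard : #({0, a M} : Finset F) < #(univ : Finset F) := by
    rw [card_univ, Fintype.card_eq_nat_card, GaloisField.card 2 n (by omega)]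
    calc #({0, a M} : Finset F) ≤ 2 := card_le_two
      _ < 2 ^ 2 := by norm_num
      _ ≤ 2 ^ n := Nat.pow_le_pow_right two_pos hn
  obtain ⟨c, -, hc⟩ := exists_mem_notMem_of_card_lt_card hcard
  simp only [mem_insert, mem_singleton, not_or] at hc
  have hcomm := (commute_iff (mk c 0) M).mp (Subgroup.mem_center_iff.mp hM (mk c 0))
  simp only [a_mk] at hcomm
  tauto

def aUnit (x : {M : Anu n // M ∉ Subgroup.center (Anu n)}) : Fˣ :=
  Units.mk0 (a x.1) fun h => x.2 (mem_center_of_a_eq_zero h)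

theorem isUnionOfCliques_commutingGraph [Fintype (Anu n)] (hn : 2 ≤ n) :
    IsUnionOfCliques (commutingGraph (Anu n)) aUnit (2 ^ n) where
  adj_iff x y := by
    have hx : a x.1 ≠ 0 := (aUnit x).ne_zero
    have hy : a y.1 ≠ 0 := (aUnit y).ne_zero
    change x ≠ y ∧ Commute x.1 y.1 ↔ _
    rw [commute_iff, aUnit, aUnit, Units.mk0_inj]
    tauto
  card_fiber u := by
    have : Fintype F := Fintype.ofFinite F
    rw [← GaloisField.card 2 n (by omega), ← Fintype.card_eq_nat_card, ← card_univ]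
    refine card_nbij' (fun x => b x.1)
      (fun c => ⟨mk u c, fun h => u.ne_zero (by simpa using (mem_center_iff hn _).mp h)⟩)
      (fun _ _ => mem_coe.mpr (mem_univ _)) (fun c _ => by simp [aUnit, Units.ext_iff])
      (fun x hx => ?_) (fun c _ => b_mk _ _)
    simp only [coe_filter, mem_univ, true_and, Set.mem_ofPred_eq] at hx
    exact Subtype.ext (ext (by simp [← hx, aUnit]) (b_mk _ _))

end Anu

/-- CNL/CNSL spectra and energies of the commuting graph of `A(n, ν)`, `n ≥ 2`. -/
theorem cnl_spectra_energies_Anu (n : ℕ) (hn : 2 ≤ n) :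
    letI : Fintype (Anu n) := Fintype.ofFinite _
    (cnlSpec (commutingGraph (Anu n)) =
      Multiset.replicate (2 ^ n - 1) (0 : ℝ) +
        Multiset.replicate ((2 ^ n - 1) ^ 2) ((2 : ℝ) ^ n * ((2 : ℝ) ^ n - 2)) ∧
    cnslSpec (commutingGraph (Anu n)) =
      Multiset.replicate (2 ^ n - 1) (2 * ((2 : ℝ) ^ n - 1) * ((2 : ℝ) ^ n - 2)) +
        Multiset.replicate ((2 ^ n - 1) ^ 2) (((2 : ℝ) ^ n - 2) ^ 2) ∧
    cnlEnergy (commutingGraph (Anu n)) = 2 * ((2 : ℝ) ^ n - 2) * ((2 : ℝ) ^ n - 1) ^ 2 ∧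
    cnslEnergy (commutingGraph (Anu n)) = 2 * ((2 : ℝ) ^ n - 2) * ((2 : ℝ) ^ n - 1) ^ 2) := by
  let : Fintype (Anu n) := Fintype.ofFinite _
  let : Fintype (GaloisField 2 n) := Fintype.ofFinite _
  have h := Anu.isUnionOfCliques_commutingGraph hn
  have hk : 2 ≤ 2 ^ n := Nat.le_self_pow (by omega) 2
  have hm : Fintype.card (GaloisField 2 n)ˣ = 2 ^ n - 1 := by
    rw [Fintype.card_eq_nat_card, Nat.card_units, GaloisField.card 2 n (by omega)]
  rw [h.cnlSpec_eq (by omega), h.cnslSpec_eq (by omega), h.cnlEnergy_eq hk, h.cnslEnergy_eq hk, hm,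
    ← sq]
  push_cast [Nat.cast_sub (by omega : 1 ≤ 2 ^ n)]
  exact ⟨rfl, rfl, by ring, by ring⟩
end
end

section
/- Let p be a prime, let F = GF(p^n), and let A(n, p) be the group of triples V(a,b,c) with a, b, c ∈ F under the multiplication V(a,b,c)·V(a′,b′,c′) = V(a+a′, b+b′+ca′, c+c′) (equivalently, the group of lower unitriangular 3×3 matrices over F). Then the CNL-spectrum of Γ_{A(n,p)} is {0 with multiplicity p^n+1, (p^{2n}−p^n)(p^{2n}−p^n−2) with multiplicity (p^n+1)(p^{2n}−p^n−1)}; the CNSL-spectrum of Γ_{A(n,p)} is {2(p^{2n}−p^n−1)(p^{2n}−p^n−2) with multiplicity p^n+1, (p^{2n}−p^n−2)² with multiplicity (p^n+1)(p^{2n}−p^n−1)}; and LE_CN(Γ_{A(n,p)}) = LE⁺_CN(Γ_{A(n,p)}) = 2(p^n+1)²(p^{3n} − 3p^{2n} + p^n + 2). -/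
open scoped Classical

noncomputable section

open CN

/-- The underlying type of the group `A(n, p)`: triples `V(a, b, c)` over `F = GF(p^n)`. -/
def Anp (p n : ℕ) [Fact p.Prime] := GaloisField p n × GaloisField p n × GaloisField p n

namespace Anp

variable {p n : ℕ} [Fact p.Prime]

instance instMul : Mul (Anp p n) :=
  ⟨fun x y => (x.1 + y.1, x.2.1 + y.2.1 + x.2.2 * y.1, x.2.2 + y.2.2)⟩

instance instOne : One (Anp p n) :=
  ⟨((0 : GaloisField p n), (0 : GaloisField p n), (0 : GaloisField p n))⟩

instance instInv : Inv (Anp p n) := ⟨fun x => (-x.1, x.2.2 * x.1 - x.2.1, -x.2.2)⟩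

theorem mul_def (x y : Anp p n) :
    x * y = (x.1 + y.1, x.2.1 + y.2.1 + x.2.2 * y.1, x.2.2 + y.2.2) := rfl

theorem one_def : (1 : Anp p n) = ((0 : GaloisField p n), 0, 0) := rfl

theorem inv_def (x : Anp p n) : x⁻¹ = (-x.1, x.2.2 * x.1 - x.2.1, -x.2.2) := rfl

/-- `A(n, p)` is a group under `V(a,b,c) ⬝ V(a',b',c') = V(a+a', b+b'+c·a', c+c')`. -/
instance : Group (Anp p n) where
  mul_assoc x y z := by
    rw [mul_def, mul_def, mul_def, mul_def]
    refine Prod.ext ?_ (Prod.ext ?_ ?_) <;> dsimp <;> ring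
  one_mul x := by
    rw [mul_def, one_def]
    refine Prod.ext ?_ (Prod.ext ?_ ?_) <;> dsimp <;> ring
  mul_one x := by
    rw [mul_def, one_def]
    refine Prod.ext ?_ (Prod.ext ?_ ?_) <;> dsimp <;> ring
  inv_mul_cancel x := by
    rw [mul_def, inv_def, one_def]
    refine Prod.ext ?_ (Prod.ext ?_ ?_) <;> dsimp <;> ring

instance : Finite (Anp p n) :=
  inferInstanceAs (Finite (GaloisField p n × GaloisField p n × GaloisField p n))

end Anp

/-
Two non-central elements `V(a, b, c)` and `V(a', b', c')` of `A(n, p)` commute iff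
`a c' = c a'`, i.e. iff `(a, c)` and `(a', c')` are the same point of the projective line over
`F = GF(q)`, `q = p ^ n`. So the commuting graph is a disjoint union of `q + 1` cliques, each of
size `m = q (q - 1)`. For such a graph `CN = (m - 2) (J - I)`, where `J` is the indicator matrix
of "same clique", and `CNRS = (m - 1) (m - 2) I`; hence `CNL` and `CNSL` are of the form
`α I + β J` with `J² = m J`. A symmetric matrix annihilated by a product of two linear factors
has only those two roots as eigenvalues, and its trace then determines their multiplicities.
-/

open Matrix Polynomial

theorem Multiset.eq_replicate_add_replicate {K : Type*} [Field K] [CharZero K] {s : Multiset K}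
    {x y : K} {a b : ℕ} (hmem : ∀ z ∈ s, z = x ∨ z = y) (hcard : Multiset.card s = a + b)
    (hsum : s.sum = a * x + b * y) :
    s = Multiset.replicate a x + Multiset.replicate b y := by
  obtain rfl | hxy := eq_or_ne x y
  · rw [← Multiset.replicate_add, Multiset.eq_replicate]
    exact ⟨hcard, fun z hz => (hmem z hz).elim id id⟩
  have hy : s.filter (¬ · = x) = Multiset.replicate (s.filter (¬ · = x)).card y :=
    Multiset.eq_replicate_card.2 fun z hz =>
      (hmem z (Multiset.mem_of_mem_filter hz)).resolve_left (Multiset.mem_filter.1 hz).2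
  have hs : s = Multiset.replicate (s.count x) x
      + Multiset.replicate (s.filter (¬ · = x)).card y := by
    rw [← Multiset.filter_eq', ← hy, Multiset.filter_add_not]
  set c := s.count x
  set d := (s.filter (¬ · = x)).card
  have hcd : c + d = a + b := by rw [← hcard, hs]; simp [c, d]
  have hc : c = a := by
    rw [hs] at hsum
    simp only [Multiset.sum_add, Multiset.sum_replicate, nsmul_eq_mul] at hsum
    have hcdK : (c : K) + d = a + b := by exact_mod_cast hcd
    have : ((c : K) - a) * (x - y) = 0 := by linear_combination hsum - y * hcdK
    exact_mod_cast sub_eq_zero.1 ((mul_eq_zero.1 this).resolve_right (sub_ne_zero.2 hxy))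
  rw [hs, hc, show d = b by omega]

section Spectrum

variable {ι : Type*} [Fintype ι] [DecidableEq ι]

theorem Matrix.IsHermitian.eigenvalues_eq_or_eq {A : Matrix ι ι ℝ} (hA : A.IsHermitian)
    {x y : ℝ} (h : (A - x • 1) * (A - y • 1) = 0) (i : ι) :
    hA.eigenvalues i = x ∨ hA.eigenvalues i = y := by
  have : Nonempty ι := ⟨i⟩
  have hroot := spectrum.subset_polynomial_aeval A ((X - C x) * (X - C y))
    ⟨_, hA.eigenvalues_mem_spectrum_real i, rfl⟩
  have haeval : aeval A ((X - C x) * (X - C y)) = 0 := by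
    simpa [Algebra.algebraMap_eq_smul_one] using h
  rw [haeval, spectrum.zero_eq, Set.mem_singleton_iff] at hroot
  simpa [sub_eq_zero] using hroot

theorem Matrix.roots_charpoly_smul_one_add_smul {J : Matrix ι ι ℝ} (hJ : J.IsHermitian)
    {μ : ℝ} (hJJ : J * J = μ • J) {a b : ℕ} (htr : J.trace = a * μ)
    (hab : a + b = Fintype.card ι) (α β : ℝ) :
    (α • 1 + β • J).charpoly.roots =
      Multiset.replicate a (α + β * μ) + Multiset.replicate b α := by
  have hA : (α • 1 + β • J).IsHermitian :=
    (isHermitian_one.smul (.all α)).add (hJ.smul (.all β))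
  have hquad :
      (α • 1 + β • J - (α + β * μ) • 1) * (α • 1 + β • J - α • 1) = 0 := by
    calc _ = (β • J - (β * μ) • 1) * (β • J) := by congr 1 <;> module
      _ = (β * β) • (J * J - μ • J) := by
          rw [sub_mul, smul_mul_smul, smul_mul_assoc, one_mul]; module
      _ = 0 := by rw [hJJ, sub_self, smul_zero]
  rw [hA.roots_charpoly_eq_eigenvalues]
  apply Multiset.eq_replicate_add_replicate
  · simpa using hA.eigenvalues_eq_or_eq hquad
  · simp [hab]
  · have := hA.trace_eq_sum_eigenvalues
    rw [trace_add, trace_smul, trace_smul, trace_one, htr, ← hab] at this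
    simp only [RCLike.ofReal_real_eq_id, id, smul_eq_mul] at this
    simp only [Function.comp_def, RCLike.ofReal_real_eq_id, id, Finset.sum_map_val, ← this]
    push_cast; ring

end Spectrum

theorem Nat.card_eq_card_mul_of_card_fiber {α β : Type*} [Finite α] [Finite β] {f : α → β}
    {m : ℕ} (hf : ∀ b, Nat.card {a // f a = b} = m) : Nat.card α = Nat.card β * m := by
  have := Fintype.ofFinite β
  rw [Nat.card_congr (Equiv.sigmaFiberEquiv f).symm, Nat.card_sigma,
    Finset.sum_congr rfl fun b _ => hf b, Finset.sum_const, smul_eq_mul, Finset.card_univ,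
    Nat.card_eq_fintype_card]

theorem Fintype.card_eq_card_mul_of_card_fiber {α β : Type*} [Fintype α] [Finite β]
    {f : α → β} {m : ℕ} (hf : ∀ b, Nat.card {a // f a = b} = m) :
    Fintype.card α = Nat.card β * m := by
  rw [← Nat.card_eq_fintype_card, Nat.card_eq_card_mul_of_card_fiber hf]

section CliqueUnion

variable {ι κ : Type*}

def classMatrix (f : ι → κ) : Matrix ι ι ℝ := of fun i j => if f i = f j then 1 else 0

theorem classMatrix_isHermitian (f : ι → κ) : (classMatrix f).IsHermitian := by
  ext i j
  simp [classMatrix, eq_comm]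

variable [Fintype ι]

theorem trace_classMatrix (f : ι → κ) : (classMatrix f).trace = Fintype.card ι := by
  simp [trace, classMatrix]

variable {f : ι → κ} {m : ℕ} (hf : ∀ c, Nat.card {x // f x = c} = m)
include hf

theorem sum_classMatrix_apply (i : ι) : ∑ j, classMatrix f i j = m := by
  simp [classMatrix, Finset.sum_boole, ← hf (f i), Nat.card_eq_fintype_card,
    Fintype.card_subtype, eq_comm]

theorem classMatrix_mul_self : classMatrix f * classMatrix f = (m : ℝ) • classMatrix f := by
  ext i j
  by_cases hij : f i = f j
  · have hJij : classMatrix f i j = 1 := if_pos hij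
    rw [Matrix.smul_apply, hJij, smul_eq_mul, mul_one, ← sum_classMatrix_apply hf i, mul_apply]
    refine Finset.sum_congr rfl fun l _ => ?_
    simp only [classMatrix, of_apply]
    split_ifs <;> grind
  · refine (Finset.sum_eq_zero fun l _ => ?_).trans (by simp [classMatrix, hij])
    simp only [classMatrix, of_apply]
    split_ifs <;> grind

variable [DecidableEq ι]

theorem roots_charpoly_smul_one_add_smul_classMatrix [Finite κ] (hm : 0 < m) (α β : ℝ) :
    (α • 1 + β • classMatrix f).charpoly.roots =
      Multiset.replicate (Nat.card κ) (α + β * m) +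
        Multiset.replicate (Nat.card κ * (m - 1)) α := by
  refine roots_charpoly_smul_one_add_smul (classMatrix_isHermitian f) (classMatrix_mul_self hf)
    ?_ ?_ α β
  · rw [trace_classMatrix, Fintype.card_eq_card_mul_of_card_fiber hf, Nat.cast_mul]
  · rw [Fintype.card_eq_card_mul_of_card_fiber hf]
    conv_rhs => rw [← Nat.sub_add_cancel hm]
    ring

variable {G : SimpleGraph ι} (hadj : ∀ x y, G.Adj x y ↔ x ≠ y ∧ f x = f y)
include hadj

theorem cnMatrix_eq_smul : cnMatrix G = ((m : ℝ) - 2) • (classMatrix f - 1) := by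
  ext i j
  by_cases hij : i = j
  · subst hij
    simp [cnMatrix, classMatrix]
  by_cases hfij : f i = f j
  · have hset : (Finset.univ.filter fun x => x ≠ i ∧ x ≠ j ∧ G.Adj x i ∧ G.Adj x j) =
        ((Finset.univ.filter fun x => f x = f i).erase i).erase j := by
      ext x
      simp only [Finset.mem_filter, Finset.mem_erase, Finset.mem_univ, true_and, hadj]
      grind
    have hfib : ((Finset.univ.filter fun x => f x = f i).card : ℝ) = m := by
      rw [← hf (f i), Nat.card_eq_fintype_card, Fintype.card_subtype]
    rw [cnMatrix, if_neg hij, hset, Finset.cast_card_erase_of_mem (by simp [Ne.symm hij, hfij]),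
      Finset.cast_card_erase_of_mem (by simp), hfib]
    simp [classMatrix, hfij, hij]
    ring
  · have hset :
        (Finset.univ.filter fun x => x ≠ i ∧ x ≠ j ∧ G.Adj x i ∧ G.Adj x j) = ∅ := by
      ext x
      simp only [Finset.mem_filter, Finset.mem_univ, true_and, hadj, Finset.notMem_empty,
        iff_false]
      grind
    simp [cnMatrix, classMatrix, hset, hfij, hij]

theorem cnrs_eq_smul : cnrs G = (((m : ℝ) - 1) * ((m : ℝ) - 2)) • 1 := by
  rw [cnrs, smul_one_eq_diagonal]
  congr 1
  funext i
  simp [cnMatrix_eq_smul hf hadj, ← Finset.mul_sum, Finset.sum_sub_distrib,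
    sum_classMatrix_apply hf, one_apply]
  ring

theorem cnl_eq_smul :
    cnl G = ((m : ℝ) * ((m : ℝ) - 2)) • 1 + (-((m : ℝ) - 2)) • classMatrix f := by
  rw [cnl, cnrs_eq_smul hf hadj, cnMatrix_eq_smul hf hadj]
  module

theorem cnsl_eq_smul :
    cnsl G = (((m : ℝ) - 2) ^ 2) • 1 + ((m : ℝ) - 2) • classMatrix f := by
  rw [cnsl, cnrs_eq_smul hf hadj, cnMatrix_eq_smul hf hadj]
  module

theorem cnDelta_eq_of_adj_iff [Nonempty ι] : cnDelta G = ((m : ℝ) - 1) * ((m : ℝ) - 2) := by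
  rw [cnDelta, cnrs_eq_smul hf hadj, trace_smul, trace_one, smul_eq_mul, mul_div_assoc,
    div_self (Nat.cast_ne_zero.2 Fintype.card_ne_zero), mul_one]

variable [Finite κ]

theorem cnlSpec_eq_of_adj_iff (hm : 0 < m) :
    cnlSpec G = Multiset.replicate (Nat.card κ) 0 +
      Multiset.replicate (Nat.card κ * (m - 1)) ((m : ℝ) * ((m : ℝ) - 2)) := by
  rw [cnlSpec, cnl_eq_smul hf hadj, roots_charpoly_smul_one_add_smul_classMatrix hf hm]
  congr 2
  ring

theorem cnslSpec_eq_of_adj_iff (hm : 0 < m) :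
    cnslSpec G = Multiset.replicate (Nat.card κ) (2 * ((m : ℝ) - 1) * ((m : ℝ) - 2)) +
      Multiset.replicate (Nat.card κ * (m - 1)) (((m : ℝ) - 2) ^ 2) := by
  rw [cnslSpec, cnsl_eq_smul hf hadj, roots_charpoly_smul_one_add_smul_classMatrix hf hm]
  congr 2
  ring

theorem cnlEnergy_eq_of_adj_iff (hm : 2 ≤ m) :
    cnlEnergy G = 2 * Nat.card κ * ((m : ℝ) - 1) * ((m : ℝ) - 2) := by
  obtain hk | hk := (Nat.card κ).eq_zero_or_pos
  · simp [cnlEnergy, cnlSpec_eq_of_adj_iff hf hadj (by omega), hk]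
  have : Nonempty ι := Fintype.card_pos_iff.1 <| by
    rw [Fintype.card_eq_card_mul_of_card_fiber hf]
    positivity
  have hmR : (2 : ℝ) ≤ m := by exact_mod_cast hm
  simp only [cnlEnergy, cnlSpec_eq_of_adj_iff hf hadj (by omega), cnDelta_eq_of_adj_iff hf hadj,
    Multiset.map_add, Multiset.map_replicate, Multiset.sum_add, Multiset.sum_replicate,
    nsmul_eq_mul]
  rw [abs_of_nonpos (by nlinarith), abs_of_nonneg (by nlinarith)]
  push_cast [Nat.cast_sub (by omega : 1 ≤ m)]
  ring

theorem cnslEnergy_eq_of_adj_iff (hm : 2 ≤ m) :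
    cnslEnergy G = 2 * Nat.card κ * ((m : ℝ) - 1) * ((m : ℝ) - 2) := by
  obtain hk | hk := (Nat.card κ).eq_zero_or_pos
  · simp [cnslEnergy, cnslSpec_eq_of_adj_iff hf hadj (by omega), hk]
  have : Nonempty ι := Fintype.card_pos_iff.1 <| by
    rw [Fintype.card_eq_card_mul_of_card_fiber hf]
    positivity
  have hmR : (2 : ℝ) ≤ m := by exact_mod_cast hm
  simp only [cnslEnergy, cnslSpec_eq_of_adj_iff hf hadj (by omega), cnDelta_eq_of_adj_iff hf hadj,
    Multiset.map_add, Multiset.map_replicate, Multiset.sum_add, Multiset.sum_replicate,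
    nsmul_eq_mul]
  rw [abs_of_nonneg (by nlinarith), abs_of_nonpos (by nlinarith)]
  push_cast [Nat.cast_sub (by omega : 1 ≤ m)]
  ring

end CliqueUnion

open scoped LinearAlgebra.Projectivization

theorem Projectivization.mk_eq_mk_iff_mul_eq_mul {K : Type*} [Field K] {v w : K × K} (hv : v ≠ 0)
    (hw : w ≠ 0) : mk K v hv = mk K w hw ↔ v.1 * w.2 = v.2 * w.1 := by
  rw [mk_eq_mk_iff']
  constructor
  · rintro ⟨a, rfl⟩
    simp only [Prod.smul_fst, Prod.smul_snd, smul_eq_mul]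
    ring
  intro h
  by_cases hw₁ : w.1 = 0
  · have hw₂ : w.2 ≠ 0 := fun hw₂ => hw (Prod.ext hw₁ hw₂)
    refine ⟨v.2 / w.2, Prod.ext ?_ ?_⟩
    · simp only [Prod.smul_fst, smul_eq_mul, hw₁, mul_zero]
      rw [hw₁, mul_zero] at h
      exact ((mul_eq_zero.1 h).resolve_right hw₂).symm
    · simp [hw₂]
  · refine ⟨v.1 / w.1, Prod.ext ?_ ?_⟩
    · simp [hw₁]
    · simp only [Prod.smul_snd, smul_eq_mul]
      field_simp
      linear_combination h

namespace Anp

variable {p n : ℕ} [Fact p.Prime]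

theorem commute_iff {x y : Anp p n} : x * y = y * x ↔ x.1 * y.2.2 = x.2.2 * y.1 := by
  change (_ : GaloisField p n × GaloisField p n × GaloisField p n) = _ ↔ _
  simp only [mul_def, Prod.mk.injEq, add_comm x.1, add_comm x.2.2, add_comm x.2.1, add_right_inj,
    true_and, and_true]
  constructor <;> intro h <;> linear_combination -h

theorem mem_center_iff {x : Anp p n} :
    x ∈ Subgroup.center (Anp p n) ↔ x.1 = 0 ∧ x.2.2 = 0 := by
  simp only [Subgroup.mem_center_iff, commute_iff]
  refine ⟨fun h => ⟨?_, ?_⟩, fun h g => by simp [h]⟩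
  · simpa using (h (0, 0, 1)).symm
  · simpa using h (1, 0, 0)

theorem fst_snd_snd_ne_zero (x : {g : Anp p n // g ∉ Subgroup.center (Anp p n)}) :
    ((x : Anp p n).1, (x : Anp p n).2.2) ≠ 0 := fun h =>
  x.2 (mem_center_iff.2 ⟨congrArg Prod.fst h, congrArg Prod.snd h⟩)

def toProjLine (x : {g : Anp p n // g ∉ Subgroup.center (Anp p n)}) :
    ℙ (GaloisField p n) (GaloisField p n × GaloisField p n) :=
  .mk _ _ (fst_snd_snd_ne_zero x)

theorem commutingGraph_adj_iff (x y : {g : Anp p n // g ∉ Subgroup.center (Anp p n)}) :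
    (commutingGraph (Anp p n)).Adj x y ↔ x ≠ y ∧ toProjLine x = toProjLine y := by
  rw [toProjLine, toProjLine, Projectivization.mk_eq_mk_iff_mul_eq_mul, ← commute_iff]
  rfl

theorem card_projLine (hn : n ≠ 0) :
    Nat.card (ℙ (GaloisField p n) (GaloisField p n × GaloisField p n)) = p ^ n + 1 := by
  rw [Projectivization.card_of_finrank_two _ _ (by simp), GaloisField.card p n hn]

theorem card_toProjLine_fiber (hn : n ≠ 0)
    (P : ℙ (GaloisField p n) (GaloisField p n × GaloisField p n)) :
    Nat.card {x // toProjLine x = P} = (p ^ n - 1) * p ^ n := by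
  induction P using Projectivization.ind with
  | h w hw =>
  have hne (a : (GaloisField p n)ˣ) : (a : GaloisField p n) • w ≠ 0 :=
    smul_ne_zero a.ne_zero hw
  let g : (GaloisField p n)ˣ × GaloisField p n → {x // toProjLine x = .mk _ w hw} :=
    fun ab => ⟨⟨(((ab.1 : GaloisField p n) • w).1, ab.2, ((ab.1 : GaloisField p n) • w).2),
      fun h => hne ab.1 (Prod.ext (mem_center_iff.1 h).1 (mem_center_iff.1 h).2)⟩,
      (Projectivization.mk_eq_mk_iff' _ _ _ _ _).2 ⟨ab.1, rfl⟩⟩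
  have hg : Function.Bijective g := by
    constructor
    · rintro ⟨a, b⟩ ⟨a', b'⟩ h
      have h' := congrArg (fun x => ((x.1.1.1, x.1.1.2.2), x.1.1.2.1)) h
      simp only [g, Prod.mk.eta, Prod.mk.injEq] at h'
      exact Prod.ext (Units.ext (smul_left_injective _ hw h'.1)) h'.2
    · rintro ⟨x, hx⟩
      obtain ⟨a, ha⟩ := (Projectivization.mk_eq_mk_iff' _ _ _ _ _).1 hx
      have ha₀ : a ≠ 0 := by
        rintro rfl
        exact fst_snd_snd_ne_zero x (by rw [← ha, zero_smul])
      refine ⟨(Units.mk0 a ha₀, x.1.2.1), Subtype.ext (Subtype.ext ?_)⟩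
      simp only [g, Units.val_mk0, ha]
      rfl
  rw [← Nat.card_congr (Equiv.ofBijective g hg), Nat.card_prod, Nat.card_units,
    GaloisField.card p n hn]

end Anp

/-- CNL/CNSL spectra and energies of the commuting graph of `A(n, p)`. -/
theorem cnl_spectra_energies_Anp (p n : ℕ) [Fact p.Prime] (hn : 0 < n) :
    letI : Fintype (Anp p n) := Fintype.ofFinite _
    (cnlSpec (commutingGraph (Anp p n)) =
      Multiset.replicate (p ^ n + 1) (0 : ℝ) +
        Multiset.replicate ((p ^ n + 1) * (p ^ (2 * n) - p ^ n - 1))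
          (((p : ℝ) ^ (2 * n) - (p : ℝ) ^ n) * ((p : ℝ) ^ (2 * n) - (p : ℝ) ^ n - 2)) ∧
    cnslSpec (commutingGraph (Anp p n)) =
      Multiset.replicate (p ^ n + 1)
          (2 * ((p : ℝ) ^ (2 * n) - (p : ℝ) ^ n - 1) * ((p : ℝ) ^ (2 * n) - (p : ℝ) ^ n - 2)) +
        Multiset.replicate ((p ^ n + 1) * (p ^ (2 * n) - p ^ n - 1))
          (((p : ℝ) ^ (2 * n) - (p : ℝ) ^ n - 2) ^ 2) ∧
    cnlEnergy (commutingGraph (Anp p n)) =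
      2 * ((p : ℝ) ^ n + 1) ^ 2 *
        ((p : ℝ) ^ (3 * n) - 3 * (p : ℝ) ^ (2 * n) + (p : ℝ) ^ n + 2) ∧
    cnslEnergy (commutingGraph (Anp p n)) =
      2 * ((p : ℝ) ^ n + 1) ^ 2 *
        ((p : ℝ) ^ (3 * n) - 3 * (p : ℝ) ^ (2 * n) + (p : ℝ) ^ n + 2)) := by
  let _ : Fintype (Anp p n) := Fintype.ofFinite _
  have hq : 2 ≤ p ^ n := (Fact.out : p.Prime).two_le.trans (Nat.le_self_pow hn.ne' p)
  have hm : 2 ≤ (p ^ n - 1) * p ^ n := le_mul_of_one_le_of_le (by omega) hq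
  have hf := Anp.card_toProjLine_fiber (p := p) hn.ne'
  have hadj := Anp.commutingGraph_adj_iff (p := p) (n := n)
  have hk := Anp.card_projLine (p := p) hn.ne'
  have hmR : (((p ^ n - 1) * p ^ n : ℕ) : ℝ) = (p : ℝ) ^ (2 * n) - (p : ℝ) ^ n := by
    push_cast [Nat.cast_sub (Nat.one_le_of_lt hq)]
    ring
  have hmult :
      (p ^ n + 1) * ((p ^ n - 1) * p ^ n - 1) = (p ^ n + 1) * (p ^ (2 * n) - p ^ n - 1) := by
    rw [Nat.sub_one_mul, ← pow_add, ← two_mul]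
  refine ⟨?_, ?_, ?_, ?_⟩
  · rw [cnlSpec_eq_of_adj_iff hf hadj (by omega), hk, hmult, hmR]
  · rw [cnslSpec_eq_of_adj_iff hf hadj (by omega), hk, hmult, hmR]
  · rw [cnlEnergy_eq_of_adj_iff hf hadj hm, hk, hmR]
    push_cast
    ring
  · rw [cnslEnergy_eq_of_adj_iff hf hadj hm, hk, hmR]
    push_cast
    ring
end
end

section
/- Let p be a prime and let G be a finite non-abelian group such that G/Z(G) is isomorphic to ℤ_p × ℤ_p, and let z = |Z(G)|. Then the CNL-spectrum of Γ_G is {0 with multiplicity p+1, ((p−1)z)((p−1)z−2) with multiplicity (p+1)((p−1)z−1)}; the CNSL-spectrum of Γ_G is {2((p−1)z−1)((p−1)z−2) with multiplicity p+1, ((p−1)z−2)² with multiplicity (p+1)((p−1)z−1)}; and LE_CN(Γ_G) = LE⁺_CN(Γ_G) equals 0 if z = 1 and p = 2, and equals 2(p+1)((p−1)z−2)((p−1)z−1) otherwise. -/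
open scoped Classical

noncomputable section

open CN

/-! For `x ∉ Z(G)`, `[G : Z(G)] = p²` forces `[C(x) : Z(G)] = p`, so `C(x) / Z(G)` is cyclic and
`C(x)` is abelian. Hence commuting is an equivalence relation on `G ∖ Z(G)` whose classes
`C(x) ∖ Z(G)` all have `m = (p - 1)|Z(G)|` elements, and there are `p + 1` of them: `Γ_G` is a
disjoint union of `p + 1` copies of `K_m`.

For a disjoint union of `k` copies of `K_m`, let `B` be the 0/1 matrix of "same clique". Then
`CN = (m - 2)(B - I)`, so `CNL` and `CNSL` have the form `a I + b B`. Writing `B = U Uᵀ` with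
`Uᵀ U = m I`, the Weinstein–Aronszajn identity gives the eigenvalues `a + b m` (`k` times) and `a`
(`k(m - 1)` times), and `Δ = (m - 1)(m - 2)` gives the energies. -/

open Polynomial Matrix

namespace Polynomial

theorem roots_X_sub_C_pow_mul_X_sub_C_pow_s6 {R : Type*} [CommRing R] [IsDomain R] (r s : R)
    (k l : ℕ) :
    ((X - C r) ^ k * (X - C s) ^ l).roots = Multiset.replicate k r + Multiset.replicate l s := by
  rw [roots_mul (mul_ne_zero (pow_ne_zero _ (X_sub_C_ne_zero r))
      (pow_ne_zero _ (X_sub_C_ne_zero s))),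
    roots_pow, roots_pow, roots_X_sub_C, roots_X_sub_C, Multiset.nsmul_singleton,
    Multiset.nsmul_singleton]

end Polynomial

namespace Multiset

theorem sum_map_replicate_add_replicate {α β : Type*} [AddCommMonoid β] (g : α → β) (k l : ℕ)
    (r s : α) : ((replicate k r + replicate l s).map g).sum = k • g r + l • g s := by
  simp only [map_add, map_replicate, sum_add, sum_replicate]

end Multiset

section FiberMatrix

variable {V κ : Type*}

def fiberMatrix (K : Type*) [Zero K] [One K] (f : V → κ) : Matrix V V K :=
  Matrix.of fun v w => if f v = f w then 1 else 0

variable [Fintype V] {f : V → κ} {m : ℕ}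

theorem sum_fiberMatrix_apply {K : Type*} [AddCommMonoidWithOne K]
    (hfib : ∀ c, Nat.card {v // f v = c} = m) (v : V) : ∑ w, fiberMatrix K f v w = m := by
  simp only [fiberMatrix, of_apply, Finset.sum_boole, eq_comm (a := f v), ← Fintype.card_subtype,
    ← Nat.card_eq_fintype_card, hfib]

variable [Fintype κ]

theorem card_eq_card_mul_of_card_fiber
    (hfib : ∀ c, Nat.card {v // f v = c} = m) :
    Fintype.card V = Fintype.card κ * m := by
  rw [← Nat.card_eq_fintype_card, ← Nat.card_congr (Equiv.sigmaFiberEquiv f), Nat.card_sigma]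
  simp [← Nat.card_eq_fintype_card, hfib]

theorem charpoly_smul_one_add_smul_fiberMatrix [DecidableEq V] {K : Type*} [Field K] [Infinite K]
    (hfib : ∀ c, Nat.card {v // f v = c} = m) (hm : 0 < m) (a b : K) :
    (a • 1 + b • fiberMatrix K f).charpoly =
      (X - C (a + b * m)) ^ Fintype.card κ * (X - C a) ^ (Fintype.card κ * (m - 1)) := by
  set U : Matrix V κ K := of fun v c => if f v = c then 1 else 0
  have hUUt : U * Uᵀ = fiberMatrix K f := by
    ext v w
    simp [U, fiberMatrix, mul_apply, eq_comm]
  have hUtU : Uᵀ * U = (m : K) • 1 := by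
    ext c d
    simp only [mul_apply, transpose_apply, U, of_apply, mul_ite, mul_one, mul_zero, ← ite_and,
      Finset.sum_boole, Matrix.smul_apply, one_apply, smul_eq_mul]
    split_ifs with hcd
    · subst hcd
      rw [← hfib c, Nat.card_eq_fintype_card, Fintype.card_subtype]
      simp only [and_self]
    · rw [Finset.card_eq_zero.mpr (Finset.filter_eq_empty_iff.mpr ?_), Nat.cast_zero]
      rintro v - ⟨hd, hc⟩
      exact hcd (hc.symm.trans hd)
  -- compare values off `a`, where `t - a` is invertible
  refine eq_of_infinite_eval_eq _ _ ((Set.finite_singleton a).infinite_compl.mono fun t ht => ?_)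
  have hta : t - a ≠ 0 := sub_ne_zero.mpr ht
  have hdecomp : scalar V t - (a • 1 + b • fiberMatrix K f) =
      (t - a) • (1 + (-(b / (t - a)) • U) * Uᵀ) := by
    rw [smul_mul, hUUt, smul_add, smul_smul, mul_neg, mul_div_cancel₀ _ hta, scalar_apply,
      ← smul_one_eq_diagonal]
    module
  have hkm : Fintype.card V = Fintype.card κ + Fintype.card κ * (m - 1) := by
    rw [card_eq_card_mul_of_card_fiber hfib, ← mul_one_add]
    congr 1
    omega
  have hone (c : K) : (1 : Matrix κ κ K) + c • 1 = (1 + c) • 1 := by module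
  rw [Set.mem_ofPred_eq, eval_charpoly, hdecomp, det_smul, det_one_add_mul_comm, Matrix.mul_smul,
    hUtU, smul_smul, hone, det_smul, det_one, hkm]
  simp only [eval_mul, eval_pow, eval_sub, eval_X, eval_C, pow_add, mul_one]
  rw [mul_right_comm, ← mul_pow]
  congr 2
  field_simp
  ring

end FiberMatrix

namespace Subgroup

variable {G : Type*} [Group G] {p : ℕ}

theorem relIndex_center_centralizer_of_index_center_eq_sq (hp : p.Prime)
    (hZ : (center G).index = p ^ 2) {x : G} (hx : x ∉ center G) :
    (center G).relIndex (centralizer {x}) = p := by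
  have hrel : (center G).relIndex (centralizer {x}) ≠ 1 := by
    rw [Ne, relIndex_eq_one]
    exact fun h => hx (h (mem_centralizer_singleton_iff.mpr rfl))
  have hidx : (centralizer {x}).index ≠ 1 := by
    rw [Ne, index_eq_one]
    refine fun h => hx (mem_center_iff.mpr fun g => ?_)
    exact mem_centralizer_singleton_iff.mp (h ▸ mem_top g)
  rw [← relIndex_mul_index (center_le_centralizer {x})] at hZ
  exact ((hp.mul_eq_prime_sq_iff hrel hidx).mp hZ).1

theorem isMulCommutative_centralizer_of_index_center_eq_sq (hp : p.Prime)
    (hZ : (center G).index = p ^ 2) {x : G} (hx : x ∉ center G) :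
    IsMulCommutative (centralizer {x}) := by
  have : Fact p.Prime := ⟨hp⟩
  have : IsCyclic (centralizer {x} ⧸ (center G).subgroupOf (centralizer {x})) :=
    isCyclic_of_prime_card (relIndex_center_centralizer_of_index_center_eq_sq hp hZ hx)
  refine (QuotientGroup.mk' ((center G).subgroupOf (centralizer {x})))
    |>.isMulCommutative_of_isCyclic_of_ker_le_center fun c hc => ?_
  rw [QuotientGroup.ker_mk', mem_subgroupOf] at hc
  exact mem_center_iff.mpr fun d => Subtype.ext (mem_center_iff.mp hc d)

theorem centralizer_eq_centralizer_iff
    (hAC : ∀ x ∉ center G, IsMulCommutative (centralizer {x})) {x y : G}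
    (hx : x ∉ center G) (hy : y ∉ center G) :
    centralizer {x} = centralizer {y} ↔ x * y = y * x := by
  have hsub {a b : G} (ha : a ∉ center G) (hab : a * b = b * a) :
      centralizer {a} ≤ centralizer {b} := fun g hg => by
    have := hAC a ha
    exact mem_centralizer_singleton_iff.mpr
      (setLike_mul_comm hg (mem_centralizer_singleton_iff.mpr hab.symm))
  refine ⟨fun h => ?_, fun h => le_antisymm (hsub hx h) (hsub hy h.symm)⟩
  exact (mem_centralizer_singleton_iff.mp (h ▸ mem_centralizer_singleton_iff.mpr rfl))

theorem ncard_centralizer_sdiff_center [Finite G] (hp : p.Prime) (hZ : (center G).index = p ^ 2)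
    {x : G} (hx : x ∉ center G) :
    ((centralizer {x} : Set G) \ center G).ncard = (p - 1) * Nat.card (center G) := by
  have hcard := relIndex_mul_relIndex ⊥ _ _ bot_le (center_le_centralizer {x})
  rw [relIndex_bot_left, relIndex_bot_left,
    relIndex_center_centralizer_of_index_center_eq_sq hp hZ hx] at hcard
  rw [Set.ncard_sdiff (center_le_centralizer {x}), ← Nat.card_coe_set_eq, ← Nat.card_coe_set_eq]
  change Nat.card (centralizer {x}) - Nat.card (center G) = _
  rw [← hcard, Nat.sub_mul, one_mul, mul_comm]

theorem card_compl_center_of_index_center_eq_sq [Finite G] (hZ : (center G).index = p ^ 2) :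
    Nat.card {g : G // g ∉ center G} = (p + 1) * ((p - 1) * Nat.card (center G)) := by
  obtain ⟨q, rfl⟩ : ∃ q, p = q + 1 :=
    Nat.exists_eq_succ_of_ne_zero fun hp => index_ne_zero_of_finite (hZ.trans (by simp [hp]))
  have hsum := Set.ncard_add_ncard_compl (center G : Set G)
  rw [← card_mul_index (center G), hZ] at hsum
  change Nat.card (center G) + Nat.card {g : G // g ∉ center G} = _ at hsum
  rw [Nat.add_sub_cancel]
  nlinarith

end Subgroup

namespace CN

section CliqueUnion

variable {V κ : Type*} [Fintype V] [DecidableEq V] {G : SimpleGraph V} {f : V → κ} {m : ℕ}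

theorem cnMatrix_eq_of_adj_iff (hG : ∀ v w, G.Adj v w ↔ v ≠ w ∧ f v = f w)
    (hfib : ∀ c, Nat.card {v // f v = c} = m) :
    cnMatrix G = ((m : ℝ) - 2) • (fiberMatrix ℝ f - 1) := by
  ext v w
  simp only [cnMatrix, fiberMatrix, Matrix.smul_apply, Matrix.sub_apply, of_apply, one_apply,
    smul_eq_mul]
  by_cases hvw : v = w
  · simp [hvw]
  by_cases hf : f v = f w
  · have hcommon : (Finset.univ.filter fun x => x ≠ v ∧ x ≠ w ∧ G.Adj x v ∧ G.Adj x w) =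
        (Finset.univ.filter fun x => f x = f v) \ {v, w} := by
      ext x
      simp only [hG, hf, Finset.mem_filter, Finset.mem_univ, true_and, Finset.mem_sdiff,
        Finset.mem_insert, Finset.mem_singleton]
      tauto
    have hsub : ({v, w} : Finset V) ⊆ Finset.univ.filter fun x => f x = f v := by
      intro x hx
      simp only [Finset.mem_insert, Finset.mem_singleton] at hx
      rcases hx with rfl | rfl <;> simp [hf]
    have hcard := Finset.card_sdiff_add_card_eq_card hsub
    have hfiber : (Finset.univ.filter fun x => f x = f v).card = m := by
      rw [← Fintype.card_subtype, ← Nat.card_eq_fintype_card, hfib]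
    rw [← hcommon, hfiber, Finset.card_pair hvw] at hcard
    rw [if_neg hvw, if_pos hf, if_neg hvw, ← hcard]
    push_cast
    ring
  · have hempty : (Finset.univ.filter fun x => x ≠ v ∧ x ≠ w ∧ G.Adj x v ∧ G.Adj x w) = ∅ := by
      simp only [hG, Finset.filter_eq_empty_iff]
      rintro x - ⟨-, -, ⟨-, hxv⟩, -, hxw⟩
      exact hf (hxv.symm.trans hxw)
    simp [hvw, hf, hempty]

theorem cnrs_eq_of_adj_iff (hG : ∀ v w, G.Adj v w ↔ v ≠ w ∧ f v = f w)
    (hfib : ∀ c, Nat.card {v // f v = c} = m) :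
    cnrs G = (((m : ℝ) - 1) * (m - 2)) • 1 := by
  have hrow (v : V) : ∑ w, cnMatrix G v w = ((m : ℝ) - 1) * (m - 2) := by
    simp only [cnMatrix_eq_of_adj_iff hG hfib, Matrix.smul_apply, Matrix.sub_apply, smul_eq_mul,
      ← Finset.mul_sum, Finset.sum_sub_distrib, sum_fiberMatrix_apply hfib, one_apply,
      Finset.sum_ite_eq, Finset.mem_univ, if_true]
    ring
  rw [cnrs, smul_one_eq_diagonal]
  exact congrArg diagonal (funext hrow)

theorem cnl_eq_of_adj_iff (hG : ∀ v w, G.Adj v w ↔ v ≠ w ∧ f v = f w)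
    (hfib : ∀ c, Nat.card {v // f v = c} = m) :
    cnl G = ((m : ℝ) * (m - 2)) • 1 + (-((m : ℝ) - 2)) • fiberMatrix ℝ f := by
  rw [cnl, cnrs_eq_of_adj_iff hG hfib, cnMatrix_eq_of_adj_iff hG hfib]
  module

theorem cnsl_eq_of_adj_iff (hG : ∀ v w, G.Adj v w ↔ v ≠ w ∧ f v = f w)
    (hfib : ∀ c, Nat.card {v // f v = c} = m) :
    cnsl G = (((m : ℝ) - 2) ^ 2) • 1 + ((m : ℝ) - 2) • fiberMatrix ℝ f := by
  rw [cnsl, cnrs_eq_of_adj_iff hG hfib, cnMatrix_eq_of_adj_iff hG hfib]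
  module

theorem cnDelta_eq_of_adj_iff [Nonempty V] (hG : ∀ v w, G.Adj v w ↔ v ≠ w ∧ f v = f w)
    (hfib : ∀ c, Nat.card {v // f v = c} = m) :
    cnDelta G = ((m : ℝ) - 1) * (m - 2) := by
  rw [cnDelta, cnrs_eq_of_adj_iff hG hfib, trace_smul, trace_one, smul_eq_mul,
    mul_div_cancel_right₀ _ (Nat.cast_ne_zero.mpr Fintype.card_ne_zero)]

variable [Fintype κ]

theorem cnlSpec_eq_of_adj_iff (hG : ∀ v w, G.Adj v w ↔ v ≠ w ∧ f v = f w)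
    (hfib : ∀ c, Nat.card {v // f v = c} = m) (hm : 0 < m) :
    cnlSpec G = Multiset.replicate (Fintype.card κ) 0 +
      Multiset.replicate (Fintype.card κ * (m - 1)) ((m : ℝ) * (m - 2)) := by
  rw [cnlSpec, cnl_eq_of_adj_iff hG hfib, charpoly_smul_one_add_smul_fiberMatrix hfib hm,
    roots_X_sub_C_pow_mul_X_sub_C_pow_s6]
  congr 2
  ring

theorem cnslSpec_eq_of_adj_iff (hG : ∀ v w, G.Adj v w ↔ v ≠ w ∧ f v = f w)
    (hfib : ∀ c, Nat.card {v // f v = c} = m) (hm : 0 < m) :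
    cnslSpec G = Multiset.replicate (Fintype.card κ) (2 * ((m : ℝ) - 1) * (m - 2)) +
      Multiset.replicate (Fintype.card κ * (m - 1)) (((m : ℝ) - 2) ^ 2) := by
  rw [cnslSpec, cnsl_eq_of_adj_iff hG hfib, charpoly_smul_one_add_smul_fiberMatrix hfib hm,
    roots_X_sub_C_pow_mul_X_sub_C_pow_s6]
  congr 2
  ring

theorem cnlEnergy_eq_of_adj_iff [Nonempty V] (hG : ∀ v w, G.Adj v w ↔ v ≠ w ∧ f v = f w)
    (hfib : ∀ c, Nat.card {v // f v = c} = m) (hm : 0 < m) :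
    cnlEnergy G = 2 * Fintype.card κ * ((m : ℝ) - 1) * (m - 2) := by
  rw [cnlEnergy, cnlSpec_eq_of_adj_iff hG hfib hm, cnDelta_eq_of_adj_iff hG hfib,
    Multiset.sum_map_replicate_add_replicate, nsmul_eq_mul, nsmul_eq_mul]
  push_cast [Nat.cast_sub hm]
  obtain rfl | hm2 : m = 1 ∨ 2 ≤ m := by omega
  · norm_num
  · have hm2' : (2 : ℝ) ≤ m := by exact_mod_cast hm2
    rw [abs_of_nonpos (by nlinarith), abs_of_nonneg (by nlinarith)]
    ring

theorem cnslEnergy_eq_of_adj_iff [Nonempty V] (hG : ∀ v w, G.Adj v w ↔ v ≠ w ∧ f v = f w)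
    (hfib : ∀ c, Nat.card {v // f v = c} = m) (hm : 0 < m) :
    cnslEnergy G = 2 * Fintype.card κ * ((m : ℝ) - 1) * (m - 2) := by
  rw [cnslEnergy, cnslSpec_eq_of_adj_iff hG hfib hm, cnDelta_eq_of_adj_iff hG hfib,
    Multiset.sum_map_replicate_add_replicate, nsmul_eq_mul, nsmul_eq_mul]
  push_cast [Nat.cast_sub hm]
  obtain rfl | hm2 : m = 1 ∨ 2 ≤ m := by omega
  · norm_num
  · have hm2' : (2 : ℝ) ≤ m := by exact_mod_cast hm2
    rw [abs_of_nonneg (by nlinarith), abs_of_nonpos (by nlinarith)]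
    ring

end CliqueUnion

section CommutingGraph

open Subgroup

variable {G : Type*} [Group G]

theorem commutingGraph_adj_iff_centralizer_eq
    (hAC : ∀ x ∉ center G, IsMulCommutative (centralizer {x})) (v w : {g : G // g ∉ center G}) :
    (commutingGraph G).Adj v w ↔ v ≠ w ∧ centralizer {(v : G)} = centralizer {(w : G)} := by
  rw [centralizer_eq_centralizer_iff hAC v.2 w.2]
  rfl

theorem card_centralizer_eq_centralizer [Finite G] {p : ℕ} (hp : p.Prime)
    (hZ : (center G).index = p ^ 2) (v : {g : G // g ∉ center G}) :
    Nat.card {w : {g : G // g ∉ center G} // centralizer {(w : G)} = centralizer {(v : G)}} =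
      (p - 1) * Nat.card (center G) := by
  have hAC (x) (hx : x ∉ center G) := isMulCommutative_centralizer_of_index_center_eq_sq hp hZ hx
  rw [← ncard_centralizer_sdiff_center hp hZ v.2, ← Nat.card_coe_set_eq]
  refine Nat.card_congr ((Equiv.subtypeSubtypeEquivSubtypeInter (· ∉ center G)
    fun g => centralizer {g} = centralizer {(v : G)}).trans (Equiv.subtypeEquivRight fun g => ?_))
  rw [Set.mem_sdiff, SetLike.mem_coe, SetLike.mem_coe, mem_centralizer_singleton_iff]
  constructor
  · rintro ⟨hg, hgv⟩
    exact ⟨(centralizer_eq_centralizer_iff hAC hg v.2).mp hgv, hg⟩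
  · rintro ⟨hgv, hg⟩
    exact ⟨hg, (centralizer_eq_centralizer_iff hAC hg v.2).mpr hgv⟩

end CommutingGraph

end CN

theorem cnl_spectra_energies_central_quotient_ZpZp_general
    (p : ℕ) (hp : p.Prime) (G : Type*) [Group G] [Fintype G]
    (hiso : Nonempty ((G ⧸ Subgroup.center G) ≃* (ZMod p × ZMod p)))
    (z : ℕ) (hz : z = Nat.card (Subgroup.center G)) :
    cnlSpec (commutingGraph G) =
      Multiset.replicate (p + 1) (0 : ℝ) +
        Multiset.replicate ((p + 1) * ((p - 1) * z - 1))
          ((((p : ℝ) - 1) * (z : ℝ)) * (((p : ℝ) - 1) * (z : ℝ) - 2)) ∧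
    cnslSpec (commutingGraph G) =
      Multiset.replicate (p + 1)
          (2 * (((p : ℝ) - 1) * (z : ℝ) - 1) * (((p : ℝ) - 1) * (z : ℝ) - 2)) +
        Multiset.replicate ((p + 1) * ((p - 1) * z - 1))
          ((((p : ℝ) - 1) * (z : ℝ) - 2) ^ 2) ∧
    (z = 1 ∧ p = 2 →
      cnlEnergy (commutingGraph G) = 0 ∧ cnslEnergy (commutingGraph G) = 0) ∧
    (¬(z = 1 ∧ p = 2) →
      cnlEnergy (commutingGraph G) =
        2 * ((p : ℝ) + 1) * (((p : ℝ) - 1) * (z : ℝ) - 2) * (((p : ℝ) - 1) * (z : ℝ) - 1) ∧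
      cnslEnergy (commutingGraph G) =
        2 * ((p : ℝ) + 1) * (((p : ℝ) - 1) * (z : ℝ) - 2) * (((p : ℝ) - 1) * (z : ℝ) - 1)) := by
  obtain ⟨φ⟩ := hiso
  have hZ : (Subgroup.center G).index = p ^ 2 := by
    rw [Subgroup.index_eq_card, Nat.card_congr φ.toEquiv, Nat.card_prod, Nat.card_zmod, sq]
  set f := Set.rangeFactorization fun v : {g : G // g ∉ Subgroup.center G} =>
    Subgroup.centralizer {(v : G)}
  have hG (v w) : (commutingGraph G).Adj v w ↔ v ≠ w ∧ f v = f w :=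
    (commutingGraph_adj_iff_centralizer_eq
      (fun x hx => Subgroup.isMulCommutative_centralizer_of_index_center_eq_sq hp hZ hx) v w).trans
      (and_congr_right' ⟨fun h => Subtype.ext h, congrArg Subtype.val⟩)
  have hfib (c) : Nat.card {v // f v = c} = (p - 1) * z := by
    obtain ⟨v, rfl⟩ := Set.rangeFactorization_surjective c
    rw [hz, ← card_centralizer_eq_centralizer hp hZ v]
    exact Nat.card_congr (Equiv.subtypeEquivRight fun w => Subtype.ext_iff)
  have hm : 0 < (p - 1) * z := Nat.mul_pos (Nat.sub_pos_of_lt hp.one_lt) (hz ▸ Nat.card_pos)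
  have hV : Fintype.card {g : G // g ∉ Subgroup.center G} = (p + 1) * ((p - 1) * z) := by
    rw [← Nat.card_eq_fintype_card, Subgroup.card_compl_center_of_index_center_eq_sq hZ, hz]
  have hk := Nat.eq_of_mul_eq_mul_right hm ((card_eq_card_mul_of_card_fiber hfib).symm.trans hV)
  have : Nonempty {g : G // g ∉ Subgroup.center G} :=
    Fintype.card_pos_iff.mp (hV ▸ Nat.mul_pos (Nat.succ_pos p) hm)
  have hM : ((p : ℝ) - 1) * z = (((p - 1) * z : ℕ) : ℝ) := by
    push_cast [Nat.cast_sub hp.one_le]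
    ring
  rw [hM, cnlSpec_eq_of_adj_iff hG hfib hm, cnslSpec_eq_of_adj_iff hG hfib hm,
    cnlEnergy_eq_of_adj_iff hG hfib hm, cnslEnergy_eq_of_adj_iff hG hfib hm, hk]
  refine ⟨rfl, rfl, fun ⟨hz1, hp2⟩ => ?_, fun _ => ⟨by push_cast; ring, by push_cast; ring⟩⟩
  subst hz1 hp2
  norm_num

/-- CNL/CNSL spectra and energies of the commuting graph of a finite non-abelian group `G`
with `G/Z(G) ≅ ℤ_p × ℤ_p`, where `z = |Z(G)|`. -/
theorem cnl_spectra_energies_central_quotient_ZpZp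
    (p : ℕ) (hp : p.Prime) (G : Type*) [Group G] [Fintype G]
    (hna : ¬∀ x y : G, x * y = y * x)
    (hiso : Nonempty ((G ⧸ Subgroup.center G) ≃* (ZMod p × ZMod p)))
    (z : ℕ) (hz : z = Nat.card (Subgroup.center G)) :
    cnlSpec (commutingGraph G) =
      Multiset.replicate (p + 1) (0 : ℝ) +
        Multiset.replicate ((p + 1) * ((p - 1) * z - 1))
          ((((p : ℝ) - 1) * (z : ℝ)) * (((p : ℝ) - 1) * (z : ℝ) - 2)) ∧
    cnslSpec (commutingGraph G) =
      Multiset.replicate (p + 1)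
          (2 * (((p : ℝ) - 1) * (z : ℝ) - 1) * (((p : ℝ) - 1) * (z : ℝ) - 2)) +
        Multiset.replicate ((p + 1) * ((p - 1) * z - 1))
          ((((p : ℝ) - 1) * (z : ℝ) - 2) ^ 2) ∧
    (z = 1 ∧ p = 2 →
      cnlEnergy (commutingGraph G) = 0 ∧ cnslEnergy (commutingGraph G) = 0) ∧
    (¬(z = 1 ∧ p = 2) →
      cnlEnergy (commutingGraph G) =
        2 * ((p : ℝ) + 1) * (((p : ℝ) - 1) * (z : ℝ) - 2) * (((p : ℝ) - 1) * (z : ℝ) - 1) ∧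
      cnslEnergy (commutingGraph G) =
        2 * ((p : ℝ) + 1) * (((p : ℝ) - 1) * (z : ℝ) - 2) * (((p : ℝ) - 1) * (z : ℝ) - 1)) :=
  cnl_spectra_energies_central_quotient_ZpZp_general p hp G hiso z hz
end
end

section
/- Let p be a prime and let G be a non-abelian group of order p³. Then the CNL-spectrum of Γ_G is {0 with multiplicity p+1, p(p−1)(p(p−1)−2) with multiplicity (p+1)((p−1)p−1)}; the CNSL-spectrum of Γ_G is {2((p−1)p−1)((p−1)p−2) with multiplicity p+1, ((p−1)p−2)² with multiplicity (p+1)((p−1)p−1)}; and LE_CN(Γ_G) = LE⁺_CN(Γ_G) = 2(p+1)((p−1)p−2)((p−1)p−1). -/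
/-!
In a non-abelian group of order `p³` the center has order `p` and the centralizer of a
non-central element has order `p²`, hence is abelian. So commuting is an equivalence relation on
`G ∖ Z(G)`, and `Γ_G` is the disjoint union of `p + 1` cliques on `m = p² - p` vertices each.
For such a graph `CN = (m - 2)(J - I)` blockwise, so `CNL` and `CNSL` are block diagonal with blocks
`a I + b (J - I)`, whose eigenvalues are `a + (m - 1) b` once and `a - b` with multiplicity `m - 1`.
-/

open scoped Classical

noncomputable section

open CN

open Polynomial

theorem Setoid.card_quotient_mul_eq_card {α : Type*} [Fintype α] (s : Setoid α) {m : ℕ}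
    (hm : ∀ v, (Finset.univ.filter (s · v)).card = m) :
    Fintype.card (Quotient s) * m = Fintype.card α := by
  rw [Fintype.card_congr (Equiv.sigmaFiberEquiv (Quotient.mk s)).symm, Fintype.card_sigma]
  refine (Finset.sum_const_nat fun q _ => ?_).symm
  obtain ⟨v, rfl⟩ := Quotient.exists_rep q
  simpa only [Fintype.card_subtype, Quotient.eq] using hm v

theorem Polynomial.roots_X_sub_C_mul_X_sub_C_pow_pow {R : Type*} [CommRing R] [IsDomain R]
    (x y : R) (n k : ℕ) :
    (((X - C x) * (X - C y) ^ n) ^ k).roots =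
      Multiset.replicate k x + Multiset.replicate (k * n) y := by
  have hne : (X - C x) * (X - C y) ^ n ≠ 0 :=
    ((monic_X_sub_C x).mul ((monic_X_sub_C y).pow n)).ne_zero
  rw [roots_pow, roots_mul hne, roots_pow, roots_X_sub_C, roots_X_sub_C, smul_add, smul_smul,
    Multiset.nsmul_singleton, Multiset.nsmul_singleton]

namespace Matrix

variable {K : Type*} [Field K] [Infinite K] {α : Type*} [Fintype α] [DecidableEq α]

theorem charpoly_of_ite_eq [Nonempty α] (a b : K) :
    (of fun i j : α => if i = j then a else b).charpoly =
      (X - C (a + (Fintype.card α - 1 : K) * b)) * (X - C (a - b)) ^ (Fintype.card α - 1) := by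
  refine eq_of_infinite_eval_eq _ _ (((Set.finite_singleton (a - b)).infinite_compl).mono ?_)
  intro z (hz : z ≠ a - b)
  have hc : z - a + b ≠ 0 := fun h => hz (by linear_combination h)
  -- `z • 1 - M` is a scalar matrix plus a rank-one perturbation
  have hsplit : scalar α z - of (fun i j : α => if i = j then a else b) =
      (z - a + b) • (1 + replicateCol Unit (fun _ => -b / (z - a + b)) *
        replicateRow Unit (fun _ => (1 : K))) := by
    ext i j
    by_cases h : i = j
    · subst h; simp [mul_apply]; field_simp; ring
    · simp [mul_apply, one_apply_ne h, h]; field_simp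
  obtain ⟨n, hn⟩ := Nat.exists_eq_add_one_of_ne_zero (Fintype.card_ne_zero (α := α))
  simp only [Set.mem_ofPred_eq, eval_charpoly, hsplit, det_smul,
    det_one_add_replicateCol_mul_replicateRow, eval_mul, eval_pow, eval_sub, eval_X, eval_C,
    dotProduct, Finset.sum_const, Finset.card_univ, nsmul_eq_mul, one_mul, hn, pow_succ,
    Nat.add_sub_cancel, Nat.cast_add, Nat.cast_one]
  field_simp
  ring

theorem charpoly_of_apply_eq_ite_setoid [Nonempty α] (s : Setoid α) {m k : ℕ}
    (hm : ∀ v, (Finset.univ.filter (s · v)).card = m) (hk : Fintype.card α = k * m)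
    (a b : K) (M : Matrix α α K)
    (hM : ∀ i j, M i j = if s i j then (if i = j then a else b) else 0) :
    M.charpoly = ((X - C (a + (m - 1 : K) * b)) * (X - C (a - b)) ^ (m - 1)) ^ k := by
  have hm0 : 0 < m := by
    obtain ⟨v⟩ := ‹Nonempty α›
    exact hm v ▸ Finset.card_pos.2 ⟨v, by simp⟩
  have hclasses : Fintype.card (Quotient s) = k :=
    Nat.eq_of_mul_eq_mul_right hm0 ((s.card_quotient_mul_eq_card hm).trans hk)
  obtain e : Quotient s ≃ Fin k := Fintype.equivFinOfCardEq hclasses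
  set cls : α → Fin k := fun v => e ⟦v⟧
  have hcls : ∀ v w, cls w = cls v ↔ s w v := fun v w => by
    simp only [cls, e.injective.eq_iff, Quotient.eq]
  have hsurj : Function.Surjective cls := e.surjective.comp Quotient.mk_surjective
  have hblock : M.BlockTriangular cls := fun i j hij => by
    rw [hM, if_neg fun h => hij.ne ((hcls j i).2 h).symm]
  have hsq : ∀ q, (M.toSquareBlock cls q).charpoly =
      (X - C (a + (m - 1 : K) * b)) * (X - C (a - b)) ^ (m - 1) := by
    intro q
    obtain ⟨v, rfl⟩ := hsurj q
    have : Nonempty {w // cls w = cls v} := ⟨⟨v, rfl⟩⟩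
    have hcard : Fintype.card {w // cls w = cls v} = m := by
      rw [Fintype.card_subtype, ← hm v]
      simp only [hcls]
    rw [← hcard, ← charpoly_of_ite_eq]
    congr 1
    ext ⟨i, hi⟩ ⟨j, hj⟩
    simp [toSquareBlock_def, hM, (hcls j i).1 (hi.trans hj.symm)]
  rw [hblock.charpoly, Finset.image_univ_of_surjective hsurj,
    Finset.prod_congr rfl fun q _ => hsq q, Finset.prod_const, Finset.card_univ, Fintype.card_fin]

end Matrix

namespace SimpleGraph

variable {V : Type*} [Fintype V]

structure IsUnionOfCliques (G : SimpleGraph V) (s : Setoid V) (m : ℕ) : Prop where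
  adj_iff : ∀ x y, G.Adj x y ↔ x ≠ y ∧ s x y
  card_class : ∀ v, (Finset.univ.filter (s · v)).card = m

namespace IsUnionOfCliques

variable {G : SimpleGraph V} {s : Setoid V} {m : ℕ}

theorem one_le [Nonempty V] (h : IsUnionOfCliques G s m) : 1 ≤ m := by
  obtain ⟨v⟩ := ‹Nonempty V›
  exact h.card_class v ▸ Finset.card_pos.2 ⟨v, by simp⟩

variable [DecidableEq V]

theorem cnMatrix_apply (h : IsUnionOfCliques G s m) (i j : V) :
    cnMatrix G i j = if i ≠ j ∧ s i j then (m : ℝ) - 2 else 0 := by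
  by_cases hij : i = j
  · simp [cnMatrix, hij]
  by_cases hs : s i j
  · have hsub : ({i, j} : Finset V) ⊆ Finset.univ.filter (s · i) := by
      simp [Finset.insert_subset_iff, s.symm hs]
    have hcommon : (Finset.univ.filter fun x => x ≠ i ∧ x ≠ j ∧ G.Adj x i ∧ G.Adj x j) =
        Finset.univ.filter (s · i) \ {i, j} := by
      ext x
      simp only [Finset.mem_filter, Finset.mem_univ, true_and, Finset.mem_sdiff,
        Finset.mem_insert, Finset.mem_singleton, h.adj_iff]
      exact ⟨fun hx => ⟨hx.2.2.1.2, by tauto⟩,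
        fun hx => ⟨by tauto, by tauto, ⟨by tauto, hx.1⟩, ⟨by tauto, s.trans hx.1 hs⟩⟩⟩
    have hcard := Finset.card_sdiff_add_card_eq_card hsub
    rw [Finset.card_pair hij, h.card_class] at hcard
    rw [cnMatrix, if_neg hij, if_pos ⟨hij, hs⟩, hcommon, ← hcard]
    push_cast
    ring
  · have hnone :
        (Finset.univ.filter fun x => x ≠ i ∧ x ≠ j ∧ G.Adj x i ∧ G.Adj x j) = ∅ :=
      Finset.filter_false_of_mem fun x _ hx => by
        rw [h.adj_iff, h.adj_iff] at hx
        exact hs (s.trans (s.symm hx.2.2.1.2) hx.2.2.2.2)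
    simp [cnMatrix, hij, hs, hnone]

theorem sum_cnMatrix (h : IsUnionOfCliques G s m) (i : V) :
    ∑ j, cnMatrix G i j = ((m : ℝ) - 1) * ((m : ℝ) - 2) := by
  have hsub : ({i} : Finset V) ⊆ Finset.univ.filter (s · i) := by simp
  have hcard := Finset.card_sdiff_add_card_eq_card hsub
  rw [Finset.card_singleton, h.card_class] at hcard
  have hrow :
      Finset.univ.filter (fun j => i ≠ j ∧ s i j) = Finset.univ.filter (s · i) \ {i} := by
    ext j
    simp only [Finset.mem_filter, Finset.mem_univ, true_and, Finset.mem_sdiff,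
      Finset.mem_singleton]
    exact ⟨fun hj => ⟨s.symm hj.2, Ne.symm hj.1⟩, fun hj => ⟨Ne.symm hj.2, s.symm hj.1⟩⟩
  simp only [h.cnMatrix_apply, Finset.sum_ite, Finset.sum_const_zero, add_zero, Finset.sum_const,
    nsmul_eq_mul, hrow, ← hcard]
  push_cast
  ring

theorem cnl_apply (h : IsUnionOfCliques G s m) (i j : V) :
    cnl G i j = if s i j then
      (if i = j then ((m : ℝ) - 1) * ((m : ℝ) - 2) else -((m : ℝ) - 2)) else 0 := by
  by_cases hij : i = j
  · subst hij
    simp [cnl, cnrs, Matrix.sub_apply, h.sum_cnMatrix i, h.cnMatrix_apply i i]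
  · simp [cnl, cnrs, h.cnMatrix_apply, hij]
    split_ifs <;> simp

theorem cnsl_apply (h : IsUnionOfCliques G s m) (i j : V) :
    cnsl G i j = if s i j then
      (if i = j then ((m : ℝ) - 1) * ((m : ℝ) - 2) else (m : ℝ) - 2) else 0 := by
  by_cases hij : i = j
  · subst hij
    simp [cnsl, cnrs, Matrix.add_apply, h.sum_cnMatrix i, h.cnMatrix_apply i i]
  · simp [cnsl, cnrs, h.cnMatrix_apply, hij]

theorem cnlSpec_eq [Nonempty V] (h : IsUnionOfCliques G s m) {k : ℕ}
    (hk : Fintype.card V = k * m) :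
    cnlSpec G = Multiset.replicate k 0 +
      Multiset.replicate (k * (m - 1)) ((m : ℝ) * ((m : ℝ) - 2)) := by
  rw [cnlSpec, Matrix.charpoly_of_apply_eq_ite_setoid s h.card_class hk _ _ _ h.cnl_apply,
    Polynomial.roots_X_sub_C_mul_X_sub_C_pow_pow]
  congr 2 <;> ring

theorem cnslSpec_eq [Nonempty V] (h : IsUnionOfCliques G s m) {k : ℕ}
    (hk : Fintype.card V = k * m) :
    cnslSpec G = Multiset.replicate k (2 * ((m : ℝ) - 1) * ((m : ℝ) - 2)) +
      Multiset.replicate (k * (m - 1)) (((m : ℝ) - 2) ^ 2) := by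
  rw [cnslSpec, Matrix.charpoly_of_apply_eq_ite_setoid s h.card_class hk _ _ _ h.cnsl_apply,
    Polynomial.roots_X_sub_C_mul_X_sub_C_pow_pow]
  congr 2 <;> ring

theorem cnDelta_eq [Nonempty V] (h : IsUnionOfCliques G s m) :
    cnDelta G = ((m : ℝ) - 1) * ((m : ℝ) - 2) := by
  rw [cnDelta, cnrs, Matrix.trace_diagonal]
  simp only [h.sum_cnMatrix, Finset.sum_const, Finset.card_univ, nsmul_eq_mul]
  field_simp

theorem cnlEnergy_eq [Nonempty V] (h : IsUnionOfCliques G s m) {k : ℕ}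
    (hk : Fintype.card V = k * m) :
    cnlEnergy G = 2 * k * (((m : ℝ) - 1) * ((m : ℝ) - 2)) := by
  obtain ⟨n, rfl⟩ := Nat.exists_eq_add_of_le' h.one_le
  rw [cnlEnergy, h.cnlSpec_eq hk, h.cnDelta_eq]
  simp only [Multiset.map_add, Multiset.map_replicate, Multiset.sum_add, Multiset.sum_replicate,
    nsmul_eq_mul, Nat.add_sub_cancel]
  push_cast
  rcases n with _ | n
  · simp
  · push_cast
    rw [abs_of_nonpos (by nlinarith), abs_of_nonneg (by nlinarith)]
    ring

theorem cnslEnergy_eq [Nonempty V] (h : IsUnionOfCliques G s m) {k : ℕ}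
    (hk : Fintype.card V = k * m) :
    cnslEnergy G = 2 * k * (((m : ℝ) - 1) * ((m : ℝ) - 2)) := by
  obtain ⟨n, rfl⟩ := Nat.exists_eq_add_of_le' h.one_le
  rw [cnslEnergy, h.cnslSpec_eq hk, h.cnDelta_eq]
  simp only [Multiset.map_add, Multiset.map_replicate, Multiset.sum_add, Multiset.sum_replicate,
    nsmul_eq_mul, Nat.add_sub_cancel]
  push_cast
  rcases n with _ | n
  · simp
  · push_cast
    rw [abs_of_nonneg (by nlinarith), abs_of_nonpos (by nlinarith)]
    ring

end IsUnionOfCliques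

end SimpleGraph

section Group

variable {G : Type*} [Group G]

def commuteSetoid (h : ∀ g ∉ Subgroup.center G, IsMulCommutative (Subgroup.centralizer {g})) :
    Setoid {g : G // g ∉ Subgroup.center G} where
  r x y := (x : G) * y = y * x
  iseqv :=
    { refl _ := rfl
      symm := Eq.symm
      trans := fun {x y z} hxy hyz => by
        have := (h y y.2).is_comm.comm
          ⟨x, Subgroup.mem_centralizer_singleton_iff.2 hxy⟩
          ⟨z, Subgroup.mem_centralizer_singleton_iff.2 hyz.symm⟩
        exact congrArg Subtype.val this }

theorem card_filter_commute_add_card_center [Fintype G] (v : G) :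
    (Finset.univ.filter fun w : {g : G // g ∉ Subgroup.center G} => (w : G) * v = v * w).card +
      Nat.card (Subgroup.center G) = Nat.card (Subgroup.centralizer {v}) := by
  set A := Finset.univ.filter fun g : G => g * v = v * g
  have hV : (Finset.univ.filter fun w : {g : G // g ∉ Subgroup.center G} => (w : G) * v = v * w) =
      A.subtype (· ∉ Subgroup.center G) := by
    ext w
    simp [A]
  have hZ :
      A.filter (¬· ∉ Subgroup.center G) = Finset.univ.filter (· ∈ Subgroup.center G) := by
    ext g
    simp only [A, Finset.mem_filter, Finset.mem_univ, true_and, not_not, and_iff_right_iff_imp]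
    exact fun hg => (Subgroup.mem_center_iff.1 hg v).symm
  rw [hV, Finset.card_subtype, Nat.card_eq_fintype_card, Fintype.card_subtype, ← hZ,
    Finset.card_filter_add_card_filter_not, Nat.card_eq_fintype_card, Fintype.card_subtype]
  simp only [A, Subgroup.mem_centralizer_singleton_iff]

theorem commutingGraph_isUnionOfCliques [Fintype G]
    (h : ∀ g ∉ Subgroup.center G, IsMulCommutative (Subgroup.centralizer {g})) {m : ℕ}
    (hm : ∀ g ∉ Subgroup.center G,
      Nat.card (Subgroup.centralizer {g}) = m + Nat.card (Subgroup.center G)) :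
    (commutingGraph G).IsUnionOfCliques (commuteSetoid h) m where
  adj_iff _ _ := Iff.rfl
  card_class v := by
    have := card_filter_commute_add_card_center (v : G)
    rw [hm v v.2] at this
    exact Nat.add_right_cancel this

end Group

section OrderPCubed

variable {G : Type*} [Group G] {p : ℕ}

theorem card_center_eq_prime_of_card_eq_prime_pow_three [Fact p.Prime]
    (hna : ¬∀ x y : G, x * y = y * x) (hcard : Nat.card G = p ^ 3) :
    Nat.card (Subgroup.center G) = p := by
  obtain ⟨k, hk0, hZ⟩ := IsPGroup.card_center_eq_prime_pow hcard three_pos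
  suffices k = 1 by rw [hZ, this, pow_one]
  by_contra hk
  -- otherwise `G ⧸ Z(G)` has order dividing `p`, so it is cyclic and `G` is abelian
  have hquot : Nat.card (G ⧸ Subgroup.center G) ∣ p := by
    have hp0 : p ^ 2 ≠ 0 := pow_ne_zero 2 (Fact.out : p.Prime).ne_zero
    refine (mul_dvd_mul_iff_left hp0).1 ?_
    rw [← pow_succ, ← hcard, ← (Subgroup.center G).card_mul_index, hZ]
    exact mul_dvd_mul_right (pow_dvd_pow p (by omega)) _
  have := isCyclic_of_card_dvd_prime hquot
  exact hna (isMulCommutative_of_isCyclic_quotient_center_self G).is_comm.comm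

theorem card_centralizer_eq_prime_sq [Fact p.Prime]
    (hna : ¬∀ x y : G, x * y = y * x) (hcard : Nat.card G = p ^ 3) {g : G}
    (hg : g ∉ Subgroup.center G) : Nat.card (Subgroup.centralizer {g}) = p ^ 2 := by
  have : Finite G := Nat.finite_of_card_ne_zero (by rw [hcard]; exact pow_ne_zero 3 (NeZero.ne p))
  obtain ⟨j, hj3, hC⟩ := (Nat.dvd_prime_pow Fact.out).1
    (hcard ▸ Subgroup.card_subgroup_dvd_card (Subgroup.centralizer {g}))
  have hgC : g ∈ Subgroup.centralizer {g} := Subgroup.mem_centralizer_singleton_iff.2 rfl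
  have hj1 : 2 ≤ j := by
    by_contra! hj
    have := Subgroup.eq_of_le_of_card_ge (Subgroup.center_le_centralizer {g}) <| by
      rw [hC, card_center_eq_prime_of_card_eq_prime_pow_three hna hcard]
      exact (Nat.pow_le_pow_right (NeZero.pos p) (by omega)).trans (pow_one p).le
    exact hg (this ▸ hgC)
  have hj2 : j ≠ 3 := by
    rintro rfl
    have := Subgroup.eq_top_of_card_eq _ (hC.trans hcard.symm)
    exact hg (Subgroup.centralizer_eq_top_iff_subset.1 this rfl)
  rw [hC, show j = 2 by omega]

end OrderPCubed

/-- CNL/CNSL spectra and energies of the commuting graph of a non-abelian group of order `p³`. -/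
theorem cnl_spectra_energies_order_p_cubed
    (p : ℕ) (hp : p.Prime) (G : Type*) [Group G] [Fintype G]
    (hna : ¬∀ x y : G, x * y = y * x)
    (hcard : Fintype.card G = p ^ 3) :
    cnlSpec (commutingGraph G) =
      Multiset.replicate (p + 1) (0 : ℝ) +
        Multiset.replicate ((p + 1) * ((p - 1) * p - 1))
          ((p : ℝ) * ((p : ℝ) - 1) * ((p : ℝ) * ((p : ℝ) - 1) - 2)) ∧
    cnslSpec (commutingGraph G) =
      Multiset.replicate (p + 1)
          (2 * (((p : ℝ) - 1) * (p : ℝ) - 1) * (((p : ℝ) - 1) * (p : ℝ) - 2)) +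
        Multiset.replicate ((p + 1) * ((p - 1) * p - 1))
          ((((p : ℝ) - 1) * (p : ℝ) - 2) ^ 2) ∧
    cnlEnergy (commutingGraph G) =
      2 * ((p : ℝ) + 1) * (((p : ℝ) - 1) * (p : ℝ) - 2) * (((p : ℝ) - 1) * (p : ℝ) - 1) ∧
    cnslEnergy (commutingGraph G) =
      2 * ((p : ℝ) + 1) * (((p : ℝ) - 1) * (p : ℝ) - 2) * (((p : ℝ) - 1) * (p : ℝ) - 1) := by
  have : Fact p.Prime := ⟨hp⟩
  rw [← Nat.card_eq_fintype_card] at hcard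
  have hZ := card_center_eq_prime_of_card_eq_prime_pow_three hna hcard
  have hC := fun g (hg : g ∉ Subgroup.center G) => card_centralizer_eq_prime_sq hna hcard hg
  obtain ⟨q, rfl⟩ : ∃ q, p = q + 1 := ⟨p - 1, (Nat.sub_add_cancel hp.one_le).symm⟩
  have hU := commutingGraph_isUnionOfCliques
    (fun g hg => IsPGroup.isMulCommutative_of_card_eq_prime_sq (hC g hg)) (m := q * (q + 1))
    fun g hg => by rw [hC g hg, hZ]; ring
  have hV : Fintype.card {g : G // g ∉ Subgroup.center G} = (q + 1 + 1) * (q * (q + 1)) := by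
    rw [Fintype.card_subtype_compl, ← Nat.card_eq_fintype_card, ← Nat.card_eq_fintype_card, hZ,
      hcard]
    exact Nat.sub_eq_of_eq_add (by ring)
  have : Nonempty {g : G // g ∉ Subgroup.center G} := by
    by_contra! hempty
    exact hna fun x y => Subgroup.mem_center_iff.1 (not_not.1 fun hy => hempty.false ⟨y, hy⟩) x
  simp only [Nat.add_sub_cancel]
  refine ⟨?_, ?_, ?_, ?_⟩
  · rw [hU.cnlSpec_eq hV]
    push_cast
    congr 2
    ring
  · rw [hU.cnslSpec_eq hV]
    push_cast
    congr 2 <;> ring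
  · rw [hU.cnlEnergy_eq hV]
    push_cast
    ring
  · rw [hU.cnslEnergy_eq hV]
    push_cast
    ring
end
end

section
/- Let n ≥ 2 and let Q_{4n} = ⟨x, y : y^{2n} = 1, x² = y^n, xyx⁻¹ = y⁻¹⟩ be the dicyclic (generalized quaternion) group of order 4n. Then the CNL-spectrum of Γ_{Q_{4n}} is {0 with multiplicity 2n+1, (2n−2)(2n−4) with multiplicity 2n−3}; the CNSL-spectrum of Γ_{Q_{4n}} is {0 with multiplicity 2n, 2(2n−3)(2n−4) with multiplicity 1, (2n−4)² with multiplicity 2n−3}; LE_CN(Γ_{Q_{4n}}) = 4(n−2)(n−1)(2n−3)(2n+1)/(2n−1); and LE⁺_CN(Γ_{Q_{4n}}) = 8(n−2)(n−1)n(2n−3)/(2n−1). -/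
open scoped Classical

noncomputable section

open CN

/-! The non-central elements of `Q_{4n}` are the rotations `a i` with `i + i ≠ 0` and all the
reflections `xa j`. Rotations commute with each other and with no reflection, and `xa j` commutes
only with `xa (j + n)`, so the commuting graph is `K_{2n-2} ⊔ n K_2`. Common-neighbourhood
matrices are invariant under isomorphism and block diagonal on disjoint unions; that of `K_m` is
`(m - 2)(J - I)` and that of a matching is zero. Hence CNL and CNSL are a single block with constant
diagonal and constant off-diagonal entries, padded with zeros, and the matrix determinant lemma
gives its spectrum. -/

open Polynomial in
theorem Matrix.charpoly_of_ite_eq_s11 {K ι : Type*} [Field K] [Infinite K] [Fintype ι]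
    [DecidableEq ι] [Nonempty ι] (d e : K) :
    (of fun i j : ι => if i = j then d else e).charpoly =
      (X - C (d + (Fintype.card ι - 1) * e)) * (X - C (d - e)) ^ (Fintype.card ι - 1) := by
  -- both sides agree at every `t ≠ d - e`, where the matrix determinant lemma applies
  refine eq_of_infinite_eval_eq _ _ ((Set.finite_singleton (d - e)).infinite_compl.mono ?_)
  intro t (ht : t ≠ d - e)
  set a := t - (d - e)
  have ha : a ≠ 0 := sub_ne_zero.mpr ht
  have hM : scalar ι t - of (fun i j : ι => if i = j then d else e) =
      a • (1 + vecMulVec (fun _ => -e / a) 1) := by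
    ext i j
    simp only [sub_apply, scalar_apply, diagonal_apply, of_apply, smul_apply, add_apply, one_apply,
      vecMulVec_apply, Pi.one_apply, mul_one, smul_eq_mul]
    split_ifs <;> field_simp <;> ring
  have hm : Fintype.card ι = Fintype.card ι - 1 + 1 := (Nat.sub_add_cancel Fintype.card_pos).symm
  simp only [Set.mem_ofPred_eq, eval_charpoly, hM, det_smul, vecMulVec_eq Unit,
    det_one_add_replicateCol_mul_replicateRow, eval_mul, eval_pow, eval_sub, eval_X, eval_C,
    dotProduct, Pi.one_apply, one_mul, Finset.sum_const, Finset.card_univ, nsmul_eq_mul]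
  rw [hm, pow_succ]
  field_simp
  push_cast
  ring

open Polynomial in
theorem Polynomial.roots_X_sub_C_mul_X_sub_C_pow {K : Type*} [Field K] (a b : K) (k : ℕ) :
    ((X - C a) * (X - C b) ^ k).roots = a ::ₘ Multiset.replicate k b := by
  rw [roots_mul (mul_ne_zero (X_sub_C_ne_zero a) (pow_ne_zero k (X_sub_C_ne_zero b))),
    roots_X_sub_C, roots_pow, roots_X_sub_C, Multiset.nsmul_singleton, Multiset.singleton_add]

open Finset in
theorem Finset.card_filter_univ_sum {V W : Type*} [Fintype V] [Fintype W] (p : V ⊕ W → Prop)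
    [DecidablePred p] : #{x | p x} = #{v | p (.inl v)} + #{w | p (.inr w)} := by
  simp only [card_filter, Fintype.sum_sum_type]

theorem ZMod.add_self_eq_zero_iff_eq_zero_or_eq_natCast {n : ℕ} [NeZero n] (i : ZMod (2 * n)) :
    i + i = 0 ↔ i = 0 ∨ i = n := by
  rw [← neg_eq_iff_add_eq_zero, ZMod.neg_eq_self_iff, Nat.mul_left_cancel_iff two_pos]
  refine or_congr_right ⟨fun h => ?_, fun h => ?_⟩
  · rw [← ZMod.natCast_zmod_val i, h]
  · rw [h, ZMod.val_natCast_of_lt (by have := NeZero.pos n; omega)]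

theorem ZMod.natCast_ne_zero_two_mul {n : ℕ} [NeZero n] : (n : ZMod (2 * n)) ≠ 0 := by
  rw [Ne, ZMod.natCast_eq_zero_iff]
  intro h
  have hn := NeZero.pos n
  have := Nat.le_of_dvd hn h
  omega

namespace CN

open Matrix Finset

variable {V W : Type*} [Fintype V] [DecidableEq V] [Fintype W] [DecidableEq W]

theorem cnMatrix_apply_of_ne (G : SimpleGraph V) [DecidableRel G.Adj] {i j : V} (h : i ≠ j) :
    cnMatrix G i j = #{x | G.Adj x i ∧ G.Adj x j} := by
  rw [cnMatrix, if_neg h]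
  congr 3 with x
  exact ⟨fun hx => hx.2.2, fun hx => ⟨hx.1.ne, hx.2.ne, hx⟩⟩

section Iso

variable {G : SimpleGraph V} {H : SimpleGraph W}

theorem cnMatrix_apply_iso (φ : G ≃g H) (i j : V) :
    cnMatrix H (φ i) (φ j) = cnMatrix G i j := by
  rcases eq_or_ne i j with rfl | h
  · simp [cnMatrix]
  rw [cnMatrix_apply_of_ne _ h, cnMatrix_apply_of_ne _ (φ.injective.ne h)]
  exact_mod_cast (Finset.card_equiv φ.toEquiv (by simp [SimpleGraph.Iso.map_adj_iff])).symm

theorem cnMatrix_eq_reindex (φ : G ≃g H) :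
    cnMatrix H = reindex φ.toEquiv φ.toEquiv (cnMatrix G) := by
  ext i j
  rw [reindex_apply, submatrix_apply, ← cnMatrix_apply_iso φ]
  exact congr_arg₂ (cnMatrix H) (φ.apply_symm_apply i).symm (φ.apply_symm_apply j).symm

theorem cnrs_eq_reindex (φ : G ≃g H) : cnrs H = reindex φ.toEquiv φ.toEquiv (cnrs G) := by
  rw [cnrs, cnrs, reindex_apply, submatrix_diagonal_equiv, cnMatrix_eq_reindex φ]
  congr 1 with i
  exact Equiv.sum_comp φ.toEquiv.symm (cnMatrix G _)

theorem cnlSpec_eq_of_iso (φ : G ≃g H) : cnlSpec H = cnlSpec G := by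
  rw [cnlSpec, cnlSpec, ← charpoly_reindex φ.toEquiv (cnl G), cnl, cnl, cnrs_eq_reindex φ,
    cnMatrix_eq_reindex φ]
  rfl

theorem cnslSpec_eq_of_iso (φ : G ≃g H) : cnslSpec H = cnslSpec G := by
  rw [cnslSpec, cnslSpec, ← charpoly_reindex φ.toEquiv (cnsl G), cnsl, cnsl, cnrs_eq_reindex φ,
    cnMatrix_eq_reindex φ]
  rfl

theorem cnDelta_eq_of_iso (φ : G ≃g H) : cnDelta H = cnDelta G := by
  rw [cnDelta, cnDelta, cnrs_eq_reindex φ, Fintype.card_congr φ.toEquiv]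
  congr 1
  exact Equiv.sum_comp φ.toEquiv.symm fun i => cnrs G i i

end Iso

theorem cnMatrix_nonneg (G : SimpleGraph V) (i j : V) : 0 ≤ cnMatrix G i j := by
  unfold cnMatrix
  split_ifs <;> positivity

theorem cnDelta_nonneg (G : SimpleGraph V) : 0 ≤ cnDelta G := by
  rw [cnDelta, cnrs, trace_diagonal]
  exact div_nonneg (sum_nonneg fun i _ => sum_nonneg fun j _ => cnMatrix_nonneg G i j)
    (Nat.cast_nonneg _)

theorem cnMatrix_sum (G : SimpleGraph V) (H : SimpleGraph W) :
    cnMatrix (G ⊕g H) = fromBlocks (cnMatrix G) 0 0 (cnMatrix H) := by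
  ext (i | i) (j | j)
  · rcases eq_or_ne i j with rfl | h
    · simp [cnMatrix]
    simp [cnMatrix_apply_of_ne _ h, cnMatrix_apply_of_ne _ (Sum.inl_injective.ne h),
      card_filter_univ_sum]
  · simp [cnMatrix_apply_of_ne _ Sum.inl_ne_inr, card_filter_univ_sum]
  · simp [cnMatrix_apply_of_ne _ Sum.inr_ne_inl, card_filter_univ_sum]
  · rcases eq_or_ne i j with rfl | h
    · simp [cnMatrix]
    simp [cnMatrix_apply_of_ne _ h, cnMatrix_apply_of_ne _ (Sum.inr_injective.ne h),
      card_filter_univ_sum]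

theorem cnrs_sum (G : SimpleGraph V) (H : SimpleGraph W) :
    cnrs (G ⊕g H) = fromBlocks (cnrs G) 0 0 (cnrs H) := by
  rw [cnrs, cnrs, cnrs, fromBlocks_diagonal, cnMatrix_sum]
  congr 1 with (i | i) <;> simp [Fintype.sum_sum_type]

theorem cnl_sum (G : SimpleGraph V) (H : SimpleGraph W) :
    cnl (G ⊕g H) = fromBlocks (cnl G) 0 0 (cnl H) := by
  simp only [cnl, cnrs_sum, cnMatrix_sum, sub_eq_add_neg, fromBlocks_neg, fromBlocks_add,
    neg_zero, add_zero]

theorem cnsl_sum (G : SimpleGraph V) (H : SimpleGraph W) :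
    cnsl (G ⊕g H) = fromBlocks (cnsl G) 0 0 (cnsl H) := by
  simp only [cnsl, cnrs_sum, cnMatrix_sum, fromBlocks_add, add_zero]

theorem cnlSpec_sum (G : SimpleGraph V) (H : SimpleGraph W) :
    cnlSpec (G ⊕g H) = cnlSpec G + cnlSpec H := by
  rw [cnlSpec, cnl_sum, charpoly_fromBlocks_zero₁₂, Polynomial.roots_mul
    (mul_ne_zero (charpoly_monic _).ne_zero (charpoly_monic _).ne_zero), cnlSpec, cnlSpec]

theorem cnslSpec_sum (G : SimpleGraph V) (H : SimpleGraph W) :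
    cnslSpec (G ⊕g H) = cnslSpec G + cnslSpec H := by
  rw [cnslSpec, cnsl_sum, charpoly_fromBlocks_zero₁₂, Polynomial.roots_mul
    (mul_ne_zero (charpoly_monic _).ne_zero (charpoly_monic _).ne_zero), cnslSpec, cnslSpec]

theorem trace_cnrs_sum (G : SimpleGraph V) (H : SimpleGraph W) :
    (cnrs (G ⊕g H)).trace = (cnrs G).trace + (cnrs H).trace := by
  simp [cnrs_sum, trace, Fintype.sum_sum_type]

theorem cnMatrix_top :
    cnMatrix (⊤ : SimpleGraph V) =
      of fun i j => if i = j then 0 else (Fintype.card V : ℝ) - 2 := by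
  ext i j
  rcases eq_or_ne i j with rfl | h
  · simp [cnMatrix]
  have hcommon :
      ({x | (⊤ : SimpleGraph V).Adj x i ∧ (⊤ : SimpleGraph V).Adj x j} : Finset V) =
        univ \ {i, j} := by
    ext x
    simp
  rw [cnMatrix_apply_of_ne _ h, of_apply, if_neg h, hcommon, card_univ_sdiff, card_pair h,
    Nat.cast_sub, Nat.cast_two]
  simpa [card_pair h] using card_le_univ {i, j}

theorem sum_cnMatrix_top (i : V) :
    ∑ j, cnMatrix (⊤ : SimpleGraph V) i j =
      ((Fintype.card V : ℝ) - 1) * ((Fintype.card V : ℝ) - 2) := by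
  simp only [cnMatrix_top, of_apply, sum_ite, sum_const_zero, filter_ne, sum_const, mem_univ,
    card_erase_of_mem, card_univ, nsmul_eq_mul, zero_add]
  rw [Nat.cast_pred (Fintype.card_pos_iff.mpr ⟨i⟩)]

theorem cnl_top : cnl (⊤ : SimpleGraph V) = of fun i j =>
    if i = j then ((Fintype.card V : ℝ) - 1) * ((Fintype.card V : ℝ) - 2)
    else -((Fintype.card V : ℝ) - 2) := by
  ext i j
  rw [cnl, cnrs, Matrix.sub_apply, diagonal_apply, sum_cnMatrix_top, cnMatrix_top]
  split_ifs <;> simp [*]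

theorem cnsl_top : cnsl (⊤ : SimpleGraph V) = of fun i j =>
    if i = j then ((Fintype.card V : ℝ) - 1) * ((Fintype.card V : ℝ) - 2)
    else (Fintype.card V : ℝ) - 2 := by
  ext i j
  rw [cnsl, cnrs, Matrix.add_apply, diagonal_apply, sum_cnMatrix_top, cnMatrix_top]
  split_ifs <;> simp [*]

theorem cnlSpec_top [Nonempty V] : cnlSpec (⊤ : SimpleGraph V) =
    0 ::ₘ Multiset.replicate (Fintype.card V - 1)
      ((Fintype.card V : ℝ) * ((Fintype.card V : ℝ) - 2)) := by
  rw [cnlSpec, cnl_top, charpoly_of_ite_eq_s11, Polynomial.roots_X_sub_C_mul_X_sub_C_pow]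
  congr 2 <;> ring

theorem cnslSpec_top [Nonempty V] : cnslSpec (⊤ : SimpleGraph V) =
    2 * ((Fintype.card V : ℝ) - 1) * ((Fintype.card V : ℝ) - 2) ::ₘ
      Multiset.replicate (Fintype.card V - 1) (((Fintype.card V : ℝ) - 2) ^ 2) := by
  rw [cnslSpec, cnsl_top, charpoly_of_ite_eq_s11, Polynomial.roots_X_sub_C_mul_X_sub_C_pow]
  congr 2 <;> ring

theorem trace_cnrs_top : (cnrs (⊤ : SimpleGraph V)).trace =
    Fintype.card V * (((Fintype.card V : ℝ) - 1) * ((Fintype.card V : ℝ) - 2)) := by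
  simp [cnrs, sum_cnMatrix_top]

section CNFree

variable {G : SimpleGraph V}

theorem cnMatrix_eq_zero_of_subsingleton_neighborSet (hG : ∀ v, (G.neighborSet v).Subsingleton) :
    cnMatrix G = 0 := by
  ext i j
  rcases eq_or_ne i j with rfl | h
  · simp [cnMatrix]
  rw [cnMatrix_apply_of_ne _ h, Matrix.zero_apply, Nat.cast_eq_zero, card_eq_zero,
    filter_eq_empty_iff]
  rintro x - ⟨hi, hj⟩
  exact h (hG x hi hj)

theorem cnrs_eq_zero_of_cnMatrix_eq_zero (hG : cnMatrix G = 0) : cnrs G = 0 := by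
  simp [cnrs, hG]

theorem cnlSpec_eq_of_cnMatrix_eq_zero (hG : cnMatrix G = 0) :
    cnlSpec G = Multiset.replicate (Fintype.card V) 0 := by
  rw [cnlSpec, cnl, cnrs_eq_zero_of_cnMatrix_eq_zero hG, hG, sub_zero, charpoly_zero,
    Polynomial.roots_X_pow, Multiset.nsmul_singleton]

theorem cnslSpec_eq_of_cnMatrix_eq_zero (hG : cnMatrix G = 0) :
    cnslSpec G = Multiset.replicate (Fintype.card V) 0 := by
  rw [cnslSpec, cnsl, cnrs_eq_zero_of_cnMatrix_eq_zero hG, hG, add_zero, charpoly_zero,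
    Polynomial.roots_X_pow, Multiset.nsmul_singleton]

end CNFree

end CN

namespace QuaternionGroup

open CN Finset

variable {n : ℕ}

theorem a_mem_center_iff (i : ZMod (2 * n)) :
    a i ∈ Subgroup.center (QuaternionGroup n) ↔ i + i = 0 := by
  rw [Subgroup.mem_center_iff]
  refine ⟨fun h => ?_, fun h g => ?_⟩
  · have := h (xa 0)
    rw [xa_mul_a, a_mul_xa, xa.injEq] at this
    linear_combination this
  · cases g with
    | a j => rw [a_mul_a, a_mul_a, add_comm]
    | xa j => rw [xa_mul_a, a_mul_xa, xa.injEq]; linear_combination h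

theorem xa_notMem_center (hn : n ≠ 1) (j : ZMod (2 * n)) :
    xa j ∉ Subgroup.center (QuaternionGroup n) := by
  rw [Subgroup.mem_center_iff]
  intro h
  have h2 := h (a 1)
  rw [a_mul_xa, xa_mul_a, xa.injEq] at h2
  have : ((2 : ℕ) : ZMod (2 * n)) = 0 := by push_cast; linear_combination -h2
  rw [ZMod.natCast_eq_zero_iff, ← mul_one 2, mul_assoc, one_mul,
    Nat.mul_dvd_mul_iff_left two_pos, Nat.dvd_one] at this
  exact hn this

theorem not_commute_a_xa {i : ZMod (2 * n)} (hi : a i ∉ Subgroup.center (QuaternionGroup n))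
    (j : ZMod (2 * n)) : ¬Commute (a i) (xa j) := by
  intro h
  rw [Commute, SemiconjBy, a_mul_xa, xa_mul_a, xa.injEq] at h
  exact hi ((a_mem_center_iff i).mpr (by linear_combination -h))

variable (n) in
abbrev NonCentralRotation := {i : ZMod (2 * n) // a i ∉ Subgroup.center (QuaternionGroup n)}

theorem card_nonCentralRotation [NeZero n] :
    Fintype.card (NonCentralRotation n) = 2 * n - 2 := by
  rw [Fintype.card_subtype_compl, ZMod.card]
  congr
  simp_rw [a_mem_center_iff, ZMod.add_self_eq_zero_iff_eq_zero_or_eq_natCast]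
  rw [Fintype.card_subtype, filter_or, filter_eq', filter_eq', if_pos (mem_univ _),
    if_pos (mem_univ _)]
  exact card_pair ZMod.natCast_ne_zero_two_mul.symm

def reflectionGraph (hn : n ≠ 1) : SimpleGraph (ZMod (2 * n)) :=
  (commutingGraph (QuaternionGroup n)).comap fun j => ⟨xa j, xa_notMem_center hn j⟩

theorem eq_add_of_reflectionGraph_adj [NeZero n] (hn : n ≠ 1) {j k : ZMod (2 * n)}
    (h : (reflectionGraph hn).Adj j k) : k = j + n := by
  obtain ⟨hne, hcomm⟩ := h
  rw [xa_mul_xa, xa_mul_xa, a.injEq] at hcomm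
  have hjk : (k - j) + (k - j) = 0 := by linear_combination hcomm
  rcases (ZMod.add_self_eq_zero_iff_eq_zero_or_eq_natCast _).mp hjk with h0 | hn'
  · exact absurd (by rw [sub_eq_zero.mp h0]) hne
  · linear_combination hn'

theorem cnMatrix_reflectionGraph [NeZero n] (hn : n ≠ 1) : cnMatrix (reflectionGraph hn) = 0 :=
  cnMatrix_eq_zero_of_subsingleton_neighborSet fun _ _ hk _ hl =>
    (eq_add_of_reflectionGraph_adj hn hk).trans (eq_add_of_reflectionGraph_adj hn hl).symm

def commutingGraphIso (hn : n ≠ 1) :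
    (⊤ : SimpleGraph (NonCentralRotation n)) ⊕g reflectionGraph hn ≃g
      commutingGraph (QuaternionGroup n) where
  toFun := Sum.elim (fun i => ⟨a i, i.2⟩) fun j => ⟨xa j, xa_notMem_center hn j⟩
  invFun
    | ⟨a i, h⟩ => .inl ⟨i, h⟩
    | ⟨xa j, _⟩ => .inr j
  left_inv := by rintro (i | j) <;> rfl
  right_inv := by rintro ⟨i | j, h⟩ <;> rfl
  map_rel_iff' := by
    rintro (i | i) (j | j)
    · simp [commutingGraph, a_mul_a, add_comm, Subtype.ext_iff]
    · exact iff_of_false (fun h => not_commute_a_xa i.2 j h.2) (by simp)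
    · exact iff_of_false (fun h => not_commute_a_xa j.2 i h.2.symm) (by simp)
    · rfl

variable [NeZero n]

theorem nonempty_nonCentralRotation (hn : 2 ≤ n) : Nonempty (NonCentralRotation n) :=
  Fintype.card_pos_iff.mp (by rw [card_nonCentralRotation]; omega)

theorem cnlSpec_commutingGraph (hn : 2 ≤ n) :
    cnlSpec (commutingGraph (QuaternionGroup n)) =
      Multiset.replicate (2 * n + 1) 0 +
        Multiset.replicate (2 * n - 3) ((2 * (n : ℝ) - 2) * (2 * (n : ℝ) - 4)) := by
  have := nonempty_nonCentralRotation hn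
  rw [cnlSpec_eq_of_iso (commutingGraphIso (by omega)), cnlSpec_sum, cnlSpec_top,
    cnlSpec_eq_of_cnMatrix_eq_zero (cnMatrix_reflectionGraph _), card_nonCentralRotation, ZMod.card,
    Multiset.cons_add, add_comm, ← Multiset.cons_add, ← Multiset.replicate_succ,
    Nat.cast_sub (by omega), show 2 * n - 2 - 1 = 2 * n - 3 by omega]
  push_cast
  ring_nf

theorem cnslSpec_commutingGraph (hn : 2 ≤ n) :
    cnslSpec (commutingGraph (QuaternionGroup n)) =
      Multiset.replicate (2 * n) 0 +
        Multiset.replicate 1 (2 * (2 * (n : ℝ) - 3) * (2 * (n : ℝ) - 4)) +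
        Multiset.replicate (2 * n - 3) ((2 * (n : ℝ) - 4) ^ 2) := by
  have := nonempty_nonCentralRotation hn
  rw [cnslSpec_eq_of_iso (commutingGraphIso (by omega)), cnslSpec_sum, cnslSpec_top,
    cnslSpec_eq_of_cnMatrix_eq_zero (cnMatrix_reflectionGraph _), card_nonCentralRotation,
    ZMod.card, Nat.cast_sub (by omega), show 2 * n - 2 - 1 = 2 * n - 3 by omega,
    Multiset.replicate_one, ← Multiset.singleton_add, add_comm _ (Multiset.replicate (2 * n) 0),
    ← add_assoc]
  push_cast
  ring_nf

theorem cnDelta_commutingGraph (hn : 2 ≤ n) :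
    cnDelta (commutingGraph (QuaternionGroup n)) =
      ((n : ℝ) - 1) * (2 * (n : ℝ) - 3) * (2 * (n : ℝ) - 4) / (2 * (n : ℝ) - 1) := by
  rw [cnDelta_eq_of_iso (commutingGraphIso (by omega)), cnDelta, trace_cnrs_sum, trace_cnrs_top,
    cnrs_eq_zero_of_cnMatrix_eq_zero (cnMatrix_reflectionGraph _), Matrix.trace_zero,
    Fintype.card_sum, card_nonCentralRotation, ZMod.card]
  have hN : (2 : ℝ) ≤ n := by exact_mod_cast hn
  push_cast [Nat.cast_sub (by omega : 2 ≤ 2 * n)]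
  rw [div_eq_div_iff (by linarith) (by linarith)]
  ring

theorem cnlEnergy_commutingGraph (hn : 2 ≤ n) :
    cnlEnergy (commutingGraph (QuaternionGroup n)) =
      4 * ((n : ℝ) - 2) * ((n : ℝ) - 1) * (2 * (n : ℝ) - 3) * (2 * (n : ℝ) + 1) /
        (2 * (n : ℝ) - 1) := by
  rw [cnlEnergy, cnlSpec_commutingGraph hn, cnDelta_commutingGraph hn]
  simp only [Multiset.map_add, Multiset.map_replicate, Multiset.sum_add, Multiset.sum_replicate,
    nsmul_eq_mul]
  have hN : (2 : ℝ) ≤ n := by exact_mod_cast hn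
  have hpos : (0 : ℝ) < 2 * n - 1 := by linarith
  have hΔ : 0 ≤ ((n : ℝ) - 1) * (2 * n - 3) * (2 * n - 4) / (2 * n - 1) := by
    rw [← cnDelta_commutingGraph hn]
    exact cnDelta_nonneg _
  have hle : ((n : ℝ) - 1) * (2 * n - 3) * (2 * n - 4) / (2 * n - 1) ≤
      (2 * n - 2) * (2 * n - 4) := by
    rw [div_le_iff₀ hpos]
    nlinarith [mul_nonneg (mul_nonneg (by linarith : (0 : ℝ) ≤ n - 1)
      (by linarith : (0 : ℝ) ≤ 2 * n - 4)) (by linarith : (0 : ℝ) ≤ 2 * n + 1)]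
  rw [zero_sub, abs_neg, abs_of_nonneg hΔ, abs_of_nonneg (sub_nonneg.mpr hle),
    Nat.cast_sub (by omega : 3 ≤ 2 * n)]
  have : (2 * (n : ℝ) - 1) ≠ 0 := hpos.ne'
  push_cast
  field_simp
  ring

theorem cnslEnergy_commutingGraph (hn : 2 ≤ n) :
    cnslEnergy (commutingGraph (QuaternionGroup n)) =
      8 * ((n : ℝ) - 2) * ((n : ℝ) - 1) * (n : ℝ) * (2 * (n : ℝ) - 3) /
        (2 * (n : ℝ) - 1) := by
  rw [cnslEnergy, cnslSpec_commutingGraph hn, cnDelta_commutingGraph hn]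
  simp only [Multiset.map_add, Multiset.map_replicate, Multiset.sum_add, Multiset.sum_replicate,
    nsmul_eq_mul]
  have hN : (2 : ℝ) ≤ n := by exact_mod_cast hn
  have hpos : (0 : ℝ) < 2 * n - 1 := by linarith
  have hΔ : 0 ≤ ((n : ℝ) - 1) * (2 * n - 3) * (2 * n - 4) / (2 * n - 1) := by
    rw [← cnDelta_commutingGraph hn]
    exact cnDelta_nonneg _
  have hle₁ : ((n : ℝ) - 1) * (2 * n - 3) * (2 * n - 4) / (2 * n - 1) ≤
      2 * (2 * n - 3) * (2 * n - 4) := by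
    rw [div_le_iff₀ hpos]
    nlinarith [mul_nonneg (mul_nonneg (by linarith : (0 : ℝ) ≤ 2 * n - 3)
      (by linarith : (0 : ℝ) ≤ 2 * n - 4)) (by linarith : (0 : ℝ) ≤ 6 * n - 2)]
  have hle₂ : ((n : ℝ) - 1) * (2 * n - 3) * (2 * n - 4) / (2 * n - 1) ≤ (2 * n - 4) ^ 2 := by
    -- false for real `n` strictly between 2 and 3
    rcases (by omega : n = 2 ∨ 3 ≤ n) with rfl | h3
    · norm_num
    have hN3 : (3 : ℝ) ≤ n := by exact_mod_cast h3
    rw [div_le_iff₀ hpos]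
    nlinarith [mul_nonneg (by linarith : (0 : ℝ) ≤ 2 * n - 4)
      (by nlinarith : (0 : ℝ) ≤ 4 * n ^ 2 - 10 * n + 2)]
  rw [zero_sub, abs_neg, abs_of_nonneg hΔ, abs_of_nonneg (sub_nonneg.mpr hle₁),
    abs_of_nonneg (sub_nonneg.mpr hle₂), Nat.cast_sub (by omega : 3 ≤ 2 * n)]
  have : (2 * (n : ℝ) - 1) ≠ 0 := hpos.ne'
  push_cast
  field_simp
  ring

end QuaternionGroup

open QuaternionGroup

/-- CNL/CNSL spectra and energies of the commuting graph of the dicyclic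
(generalized quaternion) group `Q_{4n}` of order `4n`, `n ≥ 2`. -/
theorem cnl_spectra_energies_dicyclic (n : ℕ) (hn : 2 ≤ n) :
    haveI : NeZero n := ⟨by omega⟩
    (cnlSpec (commutingGraph (QuaternionGroup n)) =
      Multiset.replicate (2 * n + 1) (0 : ℝ) +
        Multiset.replicate (2 * n - 3) ((2 * (n : ℝ) - 2) * (2 * (n : ℝ) - 4)) ∧
    cnslSpec (commutingGraph (QuaternionGroup n)) =
      Multiset.replicate (2 * n) (0 : ℝ) +
        Multiset.replicate 1 (2 * (2 * (n : ℝ) - 3) * (2 * (n : ℝ) - 4)) +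
        Multiset.replicate (2 * n - 3) ((2 * (n : ℝ) - 4) ^ 2) ∧
    cnlEnergy (commutingGraph (QuaternionGroup n)) =
      4 * ((n : ℝ) - 2) * ((n : ℝ) - 1) * (2 * (n : ℝ) - 3) * (2 * (n : ℝ) + 1) /
        (2 * (n : ℝ) - 1) ∧
    cnslEnergy (commutingGraph (QuaternionGroup n)) =
      8 * ((n : ℝ) - 2) * ((n : ℝ) - 1) * (n : ℝ) * (2 * (n : ℝ) - 3) /
        (2 * (n : ℝ) - 1)) := by
  have : NeZero n := ⟨by omega⟩
  exact ⟨cnlSpec_commutingGraph hn, cnslSpec_commutingGraph hn, cnlEnergy_commutingGraph hn,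
    cnslEnergy_commutingGraph hn⟩
end
end
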